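/- arXiv:2402.09040 — 3 statements merged into one kernel-verified Lean document; each statement's English description precedes it below -/
import Mathlib

section
/- Let X₁, X₂, Y₁, Y₂ be nonnegative random variables with distributions F₁, F₂, G₁, G₂ all dominatedly varying, and suppose (X_k, Y_l) ∈ 𝓓⁽²⁾ for all k, l ∈ {1,2}. Then (X₁+X₂, Y₁+Y₂) ∈ 𝓓⁽²⁾, i.e. the class 𝓓⁽²⁾ is closed under summation of nonnegative, arbitrarily dependent components. -/
open MeasureTheory Filter Finset ProbabilityTheory

/-- One-dimensional tail `P[X > x]` (as a real number). -/
noncomputable def tail {Ω : Type*} [MeasurableSpace Ω] (P : Measure Ω) (X : Ω → ℝ) (x : ℝ) : ℝ :=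
  (P {ω | X ω > x}).toReal

/-- Joint tail `P[X > x, Y > y]` (as a real number). -/
noncomputable def jtail {Ω : Type*} [MeasurableSpace Ω] (P : Measure Ω) (X Y : Ω → ℝ)
    (x y : ℝ) : ℝ :=
  (P {ω | X ω > x ∧ Y ω > y}).toReal

/-- Convergence of a bivariate function to `l` as `min x y → ∞`. -/
def TendstoMin (f : ℝ → ℝ → ℝ) (l : ℝ) : Prop :=
  ∀ ε > 0, ∃ M : ℝ, ∀ x y : ℝ, M ≤ min x y → |f x y - l| < ε

/-- `X` (i.e. its distribution) is long-tailed (`F ∈ 𝓛`). -/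
def LongTailed {Ω : Type*} [MeasurableSpace Ω] (P : Measure Ω) (X : Ω → ℝ) : Prop :=
  (∀ x : ℝ, 0 < tail P X x) ∧
  ∀ a > 0, Tendsto (fun x => tail P X (x - a) / tail P X x) atTop (nhds 1)

/-- `X` has a dominatedly varying distribution (`F ∈ 𝓓`). -/
def DominatedVarying {Ω : Type*} [MeasurableSpace Ω] (P : Measure Ω) (X : Ω → ℝ) : Prop :=
  (∀ x : ℝ, 0 < tail P X x) ∧
  ∀ b ∈ Set.Ioo (0:ℝ) 1, ∃ C M : ℝ, ∀ x ≥ M, tail P X (b * x) ≤ C * tail P X x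

/-- `X` has a consistently varying distribution (`F ∈ 𝓒`). -/
def ConsistentlyVarying {Ω : Type*} [MeasurableSpace Ω] (P : Measure Ω) (X : Ω → ℝ) : Prop :=
  (∀ x : ℝ, 0 < tail P X x) ∧
  ∀ ε > 0, ∃ z₀ ∈ Set.Ioo (0:ℝ) 1, ∀ z ∈ Set.Ioo z₀ 1,
    ∃ M : ℝ, ∀ x ≥ M, tail P X (z * x) ≤ (1 + ε) * tail P X x

/-- The pair `(X,Y)` belongs to the bivariate long-tailed class `𝓛⁽²⁾`. -/
def PairL {Ω : Type*} [MeasurableSpace Ω] (P : Measure Ω) (X Y : Ω → ℝ) : Prop :=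
  LongTailed P X ∧ LongTailed P Y ∧ (∀ x y : ℝ, 0 < jtail P X Y x y) ∧
  ∀ a₁ a₂ : ℝ, 0 ≤ a₁ → 0 ≤ a₂ →
    TendstoMin (fun x y => jtail P X Y (x - a₁) (y - a₂) / jtail P X Y x y) 1

/-- The pair `(X,Y)` belongs to the bivariate dominatedly varying class `𝓓⁽²⁾`. -/
def PairD {Ω : Type*} [MeasurableSpace Ω] (P : Measure Ω) (X Y : Ω → ℝ) : Prop :=
  DominatedVarying P X ∧ DominatedVarying P Y ∧ (∀ x y : ℝ, 0 < jtail P X Y x y) ∧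
  ∀ b₁ ∈ Set.Ioo (0:ℝ) 1, ∀ b₂ ∈ Set.Ioo (0:ℝ) 1,
    ∃ C M : ℝ, ∀ x y : ℝ, M ≤ min x y →
      jtail P X Y (b₁ * x) (b₂ * y) ≤ C * jtail P X Y x y

/-- The pair `(X,Y)` belongs to the bivariate consistently varying class `𝓒⁽²⁾`. -/
def PairC {Ω : Type*} [MeasurableSpace Ω] (P : Measure Ω) (X Y : Ω → ℝ) : Prop :=
  ConsistentlyVarying P X ∧ ConsistentlyVarying P Y ∧ (∀ x y : ℝ, 0 < jtail P X Y x y) ∧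
  ∀ ε > 0, ∃ z₀ ∈ Set.Ioo (0:ℝ) 1, ∀ z₁ ∈ Set.Ioo z₀ 1, ∀ z₂ ∈ Set.Ioo z₀ 1,
    ∃ M : ℝ, ∀ x y : ℝ, M ≤ min x y →
      jtail P X Y (z₁ * x) (z₂ * y) ≤ (1 + ε) * jtail P X Y x y

/-- Generalized tail asymptotic independence (GTAI) of `X₁,…,Xₙ, Y₁,…,Yₘ`:
the conditional probability of a third exceedance given two exceedances
(one from each sequence) tends to zero. -/
def GTAI {Ω : Type*} [MeasurableSpace Ω] {n m : ℕ} (P : Measure Ω)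
    (X : Fin n → Ω → ℝ) (Y : Fin m → Ω → ℝ) : Prop :=
  (∀ i k : Fin n, ∀ j : Fin m, i ≠ k → ∀ ε > 0, ∃ M : ℝ, ∀ xi xk yj : ℝ,
      M ≤ min xi (min xk yj) →
      (P {ω | |X i ω| > xi ∧ X k ω > xk ∧ Y j ω > yj}).toReal
        ≤ ε * (P {ω | X k ω > xk ∧ Y j ω > yj}).toReal) ∧
  (∀ j k : Fin m, ∀ i : Fin n, j ≠ k → ∀ ε > 0, ∃ M : ℝ, ∀ xi yk yj : ℝ,
      M ≤ min xi (min yk yj) →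
      (P {ω | |Y j ω| > yj ∧ X i ω > xi ∧ Y k ω > yk}).toReal
        ≤ ε * (P {ω | X i ω > xi ∧ Y k ω > yk}).toReal)

/-- Tail asymptotic independence (TAI) of the sequence `X₁,…,Xₙ`. -/
def TAI {Ω : Type*} [MeasurableSpace Ω] {n : ℕ} (P : Measure Ω) (X : Fin n → Ω → ℝ) : Prop :=
  ∀ i j : Fin n, i ≠ j → ∀ ε > 0, ∃ M : ℝ, ∀ xi xj : ℝ, M ≤ min xi xj →
    (P {ω | |X i ω| > xi ∧ X j ω > xj}).toReal ≤ ε * (P {ω | X j ω > xj}).toReal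

private lemma toReal_mono_set {Ω : Type*} [MeasurableSpace Ω] (P : Measure Ω)
    [IsProbabilityMeasure P] {s t : Set Ω} (h : s ⊆ t) : (P s).toReal ≤ (P t).toReal :=
  ENNReal.toReal_mono (measure_ne_top P t) (measure_mono h)

private lemma toReal_union_le {Ω : Type*} [MeasurableSpace Ω] (P : Measure Ω)
    [IsProbabilityMeasure P] {s t u : Set Ω} (h : s ⊆ t ∪ u) :
    (P s).toReal ≤ (P t).toReal + (P u).toReal := by
  calc (P s).toReal ≤ (P (t ∪ u)).toReal := toReal_mono_set P h
    _ ≤ ((P t) + (P u)).toReal := by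
        refine ENNReal.toReal_mono ?_ (measure_union_le t u)
        exact ENNReal.add_ne_top.mpr ⟨measure_ne_top P t, measure_ne_top P u⟩
    _ = (P t).toReal + (P u).toReal := ENNReal.toReal_add (measure_ne_top P t) (measure_ne_top P u)

private lemma DV_sum {Ω : Type*} [MeasurableSpace Ω] (P : Measure Ω) [IsProbabilityMeasure P]
    (X₁ X₂ : Ω → ℝ) (h1 : ∀ ω, 0 ≤ X₁ ω) (h2 : ∀ ω, 0 ≤ X₂ ω)
    (hF1 : DominatedVarying P X₁) (hF2 : DominatedVarying P X₂) :
    DominatedVarying P (fun ω => X₁ ω + X₂ ω) := by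
  obtain ⟨hp1, hd1⟩ := hF1
  obtain ⟨hp2, hd2⟩ := hF2
  have hmono : ∀ x : ℝ, tail P X₁ x ≤ tail P (fun ω => X₁ ω + X₂ ω) x := by
    intro x
    refine toReal_mono_set P ?_
    intro ω hω
    exact lt_of_lt_of_le hω (le_add_of_nonneg_right (h2 ω))
  constructor
  · intro x; exact lt_of_lt_of_le (hp1 x) (hmono x)
  · rintro b ⟨hb0, hb1⟩
    have hb2 : b / 2 ∈ Set.Ioo (0:ℝ) 1 := ⟨by linarith, by linarith⟩
    obtain ⟨C₁, M₁, hC₁⟩ := hd1 _ hb2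
    obtain ⟨C₂, M₂, hC₂⟩ := hd2 _ hb2
    refine ⟨max C₁ 0 + max C₂ 0, max M₁ M₂, fun x hx => ?_⟩
    have hx1 : x ≥ M₁ := le_trans (le_max_left _ _) hx
    have hx2 : x ≥ M₂ := le_trans (le_max_right _ _) hx
    have hsub : {ω | X₁ ω + X₂ ω > b * x} ⊆
        {ω | X₁ ω > b / 2 * x} ∪ {ω | X₂ ω > b / 2 * x} := by
      intro ω hω
      have hω' : b * x < X₁ ω + X₂ ω := hω
      rcases lt_or_ge (b / 2 * x) (X₁ ω) with h | h
      · exact Or.inl h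
      · have heq : b * x = b / 2 * x + b / 2 * x := by ring
        exact Or.inr (by simp only [Set.mem_setOf_eq]; linarith)
    have hmono2 : ∀ x : ℝ, tail P X₂ x ≤ tail P (fun ω => X₁ ω + X₂ ω) x := by
      intro x
      refine toReal_mono_set P ?_
      intro ω hω
      exact lt_of_lt_of_le hω (le_add_of_nonneg_left (h1 ω))
    calc tail P (fun ω => X₁ ω + X₂ ω) (b * x)
        ≤ tail P X₁ (b / 2 * x) + tail P X₂ (b / 2 * x) := toReal_union_le P hsub
      _ ≤ C₁ * tail P X₁ x + C₂ * tail P X₂ x := add_le_add (hC₁ x hx1) (hC₂ x hx2)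
      _ ≤ max C₁ 0 * tail P X₁ x + max C₂ 0 * tail P X₂ x := by
          refine add_le_add ?_ ?_ <;>
            exact mul_le_mul_of_nonneg_right (le_max_left _ _) ENNReal.toReal_nonneg
      _ ≤ max C₁ 0 * tail P (fun ω => X₁ ω + X₂ ω) x
            + max C₂ 0 * tail P (fun ω => X₁ ω + X₂ ω) x := by
          refine add_le_add ?_ ?_
          · exact mul_le_mul_of_nonneg_left (hmono x) (le_max_right _ _)
          · exact mul_le_mul_of_nonneg_left (hmono2 x) (le_max_right _ _)
      _ = (max C₁ 0 + max C₂ 0) * tail P (fun ω => X₁ ω + X₂ ω) x := by ring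

/-- `𝓓⁽²⁾` is closed under summation of nonnegative,
arbitrarily dependent components. -/
theorem stmt6 {Ω : Type*} [MeasurableSpace Ω] (P : Measure Ω) [IsProbabilityMeasure P]
    (X₁ X₂ Y₁ Y₂ : Ω → ℝ)
    (hX₁ : ∀ ω, 0 ≤ X₁ ω) (hX₂ : ∀ ω, 0 ≤ X₂ ω)
    (hY₁ : ∀ ω, 0 ≤ Y₁ ω) (hY₂ : ∀ ω, 0 ≤ Y₂ ω)
    (hF₁ : DominatedVarying P X₁) (hF₂ : DominatedVarying P X₂)
    (hG₁ : DominatedVarying P Y₁) (hG₂ : DominatedVarying P Y₂)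
    (h11 : PairD P X₁ Y₁) (h12 : PairD P X₁ Y₂)
    (h21 : PairD P X₂ Y₁) (h22 : PairD P X₂ Y₂) :
    PairD P (fun ω => X₁ ω + X₂ ω) (fun ω => Y₁ ω + Y₂ ω) := by
  have jmono : ∀ (Xa Xb Ya Yb : Ω → ℝ), (∀ ω, 0 ≤ Xb ω) → (∀ ω, 0 ≤ Yb ω) →
      ∀ x y : ℝ, jtail P Xa Ya x y ≤
        jtail P (fun ω => Xa ω + Xb ω) (fun ω => Ya ω + Yb ω) x y := by
    intro Xa Xb Ya Yb hXb hYb x y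
    refine toReal_mono_set P ?_
    rintro ω ⟨hx, hy⟩
    exact ⟨lt_of_lt_of_le hx (le_add_of_nonneg_right (hXb ω)),
           lt_of_lt_of_le hy (le_add_of_nonneg_right (hYb ω))⟩
  have jm11 : ∀ x y : ℝ, jtail P X₁ Y₁ x y ≤
      jtail P (fun ω => X₁ ω + X₂ ω) (fun ω => Y₁ ω + Y₂ ω) x y :=
    jmono X₁ X₂ Y₁ Y₂ hX₂ hY₂
  have jm12 : ∀ x y : ℝ, jtail P X₁ Y₂ x y ≤
      jtail P (fun ω => X₁ ω + X₂ ω) (fun ω => Y₁ ω + Y₂ ω) x y := by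
    intro x y
    refine toReal_mono_set P ?_
    rintro ω ⟨hx, hy⟩
    exact ⟨lt_of_lt_of_le hx (le_add_of_nonneg_right (hX₂ ω)),
           lt_of_lt_of_le hy (le_add_of_nonneg_left (hY₁ ω))⟩
  have jm21 : ∀ x y : ℝ, jtail P X₂ Y₁ x y ≤
      jtail P (fun ω => X₁ ω + X₂ ω) (fun ω => Y₁ ω + Y₂ ω) x y := by
    intro x y
    refine toReal_mono_set P ?_
    rintro ω ⟨hx, hy⟩
    exact ⟨lt_of_lt_of_le hx (le_add_of_nonneg_left (hX₁ ω)),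
           lt_of_lt_of_le hy (le_add_of_nonneg_right (hY₂ ω))⟩
  have jm22 : ∀ x y : ℝ, jtail P X₂ Y₂ x y ≤
      jtail P (fun ω => X₁ ω + X₂ ω) (fun ω => Y₁ ω + Y₂ ω) x y := by
    intro x y
    refine toReal_mono_set P ?_
    rintro ω ⟨hx, hy⟩
    exact ⟨lt_of_lt_of_le hx (le_add_of_nonneg_left (hX₁ ω)),
           lt_of_lt_of_le hy (le_add_of_nonneg_left (hY₁ ω))⟩
  refine ⟨DV_sum P X₁ X₂ hX₁ hX₂ hF₁ hF₂, DV_sum P Y₁ Y₂ hY₁ hY₂ hG₁ hG₂, ?_, ?_⟩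
  · intro x y
    exact lt_of_lt_of_le (h11.2.2.1 x y) (jm11 x y)
  · rintro b₁ ⟨hb10, hb11⟩ b₂ ⟨hb20, hb21⟩
    have hb1 : b₁ / 2 ∈ Set.Ioo (0:ℝ) 1 := ⟨by linarith, by linarith⟩
    have hb2 : b₂ / 2 ∈ Set.Ioo (0:ℝ) 1 := ⟨by linarith, by linarith⟩
    obtain ⟨C11, M11, hC11⟩ := h11.2.2.2 _ hb1 _ hb2
    obtain ⟨C12, M12, hC12⟩ := h12.2.2.2 _ hb1 _ hb2
    obtain ⟨C21, M21, hC21⟩ := h21.2.2.2 _ hb1 _ hb2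
    obtain ⟨C22, M22, hC22⟩ := h22.2.2.2 _ hb1 _ hb2
    refine ⟨max C11 0 + max C12 0 + max C21 0 + max C22 0,
            max (max M11 M12) (max M21 M22), fun x y hxy => ?_⟩
    have hm11 : M11 ≤ min x y :=
      le_trans (le_trans (le_max_left _ _) (le_max_left _ _)) hxy
    have hm12 : M12 ≤ min x y :=
      le_trans (le_trans (le_max_right _ _) (le_max_left _ _)) hxy
    have hm21 : M21 ≤ min x y :=
      le_trans (le_trans (le_max_left _ _) (le_max_right _ _)) hxy
    have hm22 : M22 ≤ min x y :=
      le_trans (le_trans (le_max_right _ _) (le_max_right _ _)) hxy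
    have hsub : {ω | X₁ ω + X₂ ω > b₁ * x ∧ Y₁ ω + Y₂ ω > b₂ * y} ⊆
        ({ω | X₁ ω > b₁ / 2 * x ∧ Y₁ ω > b₂ / 2 * y}
          ∪ {ω | X₁ ω > b₁ / 2 * x ∧ Y₂ ω > b₂ / 2 * y})
        ∪ ({ω | X₂ ω > b₁ / 2 * x ∧ Y₁ ω > b₂ / 2 * y}
          ∪ {ω | X₂ ω > b₁ / 2 * x ∧ Y₂ ω > b₂ / 2 * y}) := by
      rintro ω ⟨hx, hy⟩
      have heqx : b₁ * x = b₁ / 2 * x + b₁ / 2 * x := by ring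
      have heqy : b₂ * y = b₂ / 2 * y + b₂ / 2 * y := by ring
      have hX : X₁ ω > b₁ / 2 * x ∨ X₂ ω > b₁ / 2 * x := by
        rcases lt_or_ge (b₁ / 2 * x) (X₁ ω) with h | h
        · exact Or.inl h
        · exact Or.inr (by linarith)
      have hY : Y₁ ω > b₂ / 2 * y ∨ Y₂ ω > b₂ / 2 * y := by
        rcases lt_or_ge (b₂ / 2 * y) (Y₁ ω) with h | h
        · exact Or.inl h
        · exact Or.inr (by linarith)
      rcases hX with h1 | h1 <;> rcases hY with h2 | h2
      · exact Or.inl (Or.inl ⟨h1, h2⟩)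
      · exact Or.inl (Or.inr ⟨h1, h2⟩)
      · exact Or.inr (Or.inl ⟨h1, h2⟩)
      · exact Or.inr (Or.inr ⟨h1, h2⟩)
    have step1 : jtail P (fun ω => X₁ ω + X₂ ω) (fun ω => Y₁ ω + Y₂ ω)
        (b₁ * x) (b₂ * y) ≤
        (jtail P X₁ Y₁ (b₁ / 2 * x) (b₂ / 2 * y)
          + jtail P X₁ Y₂ (b₁ / 2 * x) (b₂ / 2 * y))
        + (jtail P X₂ Y₁ (b₁ / 2 * x) (b₂ / 2 * y)
          + jtail P X₂ Y₂ (b₁ / 2 * x) (b₂ / 2 * y)) := by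
      calc jtail P (fun ω => X₁ ω + X₂ ω) (fun ω => Y₁ ω + Y₂ ω) (b₁ * x) (b₂ * y)
          ≤ (P ({ω | X₁ ω > b₁ / 2 * x ∧ Y₁ ω > b₂ / 2 * y}
              ∪ {ω | X₁ ω > b₁ / 2 * x ∧ Y₂ ω > b₂ / 2 * y})).toReal
            + (P ({ω | X₂ ω > b₁ / 2 * x ∧ Y₁ ω > b₂ / 2 * y}
              ∪ {ω | X₂ ω > b₁ / 2 * x ∧ Y₂ ω > b₂ / 2 * y})).toReal :=
            toReal_union_le P hsub
        _ ≤ _ := add_le_add (toReal_union_le P (subset_refl _))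
                            (toReal_union_le P (subset_refl _))
    have tR : ∀ (Z W : Ω → ℝ) (a b : ℝ), (0:ℝ) ≤ jtail P Z W a b :=
      fun _ _ _ _ => ENNReal.toReal_nonneg
    have hJ := jtail P (fun ω => X₁ ω + X₂ ω) (fun ω => Y₁ ω + Y₂ ω) x y
    calc jtail P (fun ω => X₁ ω + X₂ ω) (fun ω => Y₁ ω + Y₂ ω) (b₁ * x) (b₂ * y)
        ≤ (jtail P X₁ Y₁ (b₁ / 2 * x) (b₂ / 2 * y)
            + jtail P X₁ Y₂ (b₁ / 2 * x) (b₂ / 2 * y))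
          + (jtail P X₂ Y₁ (b₁ / 2 * x) (b₂ / 2 * y)
            + jtail P X₂ Y₂ (b₁ / 2 * x) (b₂ / 2 * y)) := step1
      _ ≤ (C11 * jtail P X₁ Y₁ x y + C12 * jtail P X₁ Y₂ x y)
          + (C21 * jtail P X₂ Y₁ x y + C22 * jtail P X₂ Y₂ x y) :=
          add_le_add (add_le_add (hC11 x y hm11) (hC12 x y hm12))
                     (add_le_add (hC21 x y hm21) (hC22 x y hm22))
      _ ≤ (max C11 0 * jtail P X₁ Y₁ x y + max C12 0 * jtail P X₁ Y₂ x y)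
          + (max C21 0 * jtail P X₂ Y₁ x y + max C22 0 * jtail P X₂ Y₂ x y) := by
          refine add_le_add (add_le_add ?_ ?_) (add_le_add ?_ ?_) <;>
            exact mul_le_mul_of_nonneg_right (le_max_left _ _) (tR _ _ _ _)
      _ ≤ (max C11 0 * jtail P (fun ω => X₁ ω + X₂ ω) (fun ω => Y₁ ω + Y₂ ω) x y
            + max C12 0 * jtail P (fun ω => X₁ ω + X₂ ω) (fun ω => Y₁ ω + Y₂ ω) x y)
          + (max C21 0 * jtail P (fun ω => X₁ ω + X₂ ω) (fun ω => Y₁ ω + Y₂ ω) x y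
            + max C22 0 * jtail P (fun ω => X₁ ω + X₂ ω) (fun ω => Y₁ ω + Y₂ ω) x y) := by
          refine add_le_add (add_le_add ?_ ?_) (add_le_add ?_ ?_)
          · exact mul_le_mul_of_nonneg_left (jm11 x y) (le_max_right _ _)
          · exact mul_le_mul_of_nonneg_left (jm12 x y) (le_max_right _ _)
          · exact mul_le_mul_of_nonneg_left (jm21 x y) (le_max_right _ _)
          · exact mul_le_mul_of_nonneg_left (jm22 x y) (le_max_right _ _)
      _ = (max C11 0 + max C12 0 + max C21 0 + max C22 0)
            * jtail P (fun ω => X₁ ω + X₂ ω) (fun ω => Y₁ ω + Y₂ ω) x y := by ring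
end

section
/- Let X₁, X₂, Y₁, Y₂ be nonnegative GTAI random variables with distributions in 𝓓∩𝓛 and (X_k, Y_l) ∈ (𝓓∩𝓛)⁽²⁾ for all k, l. If additionally X₁, X₂ are TAI and Y₁, Y₂ are TAI, then (X₁+X₂, Y₁+Y₂) ∈ (𝓓∩𝓛)⁽²⁾. -/
open MeasureTheory Filter Finset ProbabilityTheory

set_option linter.unusedSectionVars false
set_option linter.unusedVariables false
set_option linter.deprecated false
set_option maxHeartbeats 1000000

section Aux
variable {Ω : Type*} [MeasurableSpace Ω] (P : Measure Ω) [IsProbabilityMeasure P]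

lemma mymono {s t : Set Ω} (h : s ⊆ t) : (P s).toReal ≤ (P t).toReal :=
  ENNReal.toReal_mono (measure_ne_top P t) (measure_mono h)

lemma myunion (s t : Set Ω) : (P (s ∪ t)).toReal ≤ (P s).toReal + (P t).toReal := by
  rw [← ENNReal.toReal_add (measure_ne_top P s) (measure_ne_top P t)]
  exact ENNReal.toReal_mono (ENNReal.add_ne_top.2 ⟨measure_ne_top P s, measure_ne_top P t⟩)
    (measure_union_le s t)

lemma mychain {s t : Set Ω} {b c : ℝ} (hs : (P s).toReal ≤ b) (ht : (P t).toReal ≤ c) :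
    (P (s ∪ t)).toReal ≤ b + c :=
  le_trans (myunion P s t) (add_le_add hs ht)

/-- Measurable-hull trick: the part of `A` outside the hull of `DS` has measure at most
`P A - P E` where `E ⊆ A`, `E ⊆ DS`. -/
lemma hull_piece (A E DS : Set Ω) (hEA : E ⊆ A) (hED : E ⊆ DS) :
    ∃ R : Set Ω, A ⊆ toMeasurable P DS ∪ R ∧ (P R).toReal ≤ (P A).toReal - (P E).toReal := by
  set G := toMeasurable P A with hG
  set K := G ∩ (toMeasurable P E ∩ toMeasurable P DS) with hK
  have hKmeas : MeasurableSet K :=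
    ((measurableSet_toMeasurable P A).inter
      ((measurableSet_toMeasurable P E).inter (measurableSet_toMeasurable P DS)))
  have hEK : E ⊆ K := fun x hx =>
    ⟨subset_toMeasurable P A (hEA hx), subset_toMeasurable P E hx, subset_toMeasurable P DS (hED hx)⟩
  refine ⟨G \ K, ?_, ?_⟩
  · intro x hx
    by_cases hxK : x ∈ K
    · exact Or.inl hxK.2.2
    · exact Or.inr ⟨subset_toMeasurable P A hx, hxK⟩
  · have h1 : (P K).toReal = (P E).toReal := by
      refine le_antisymm ?_ (mymono P hEK)
      have : K ⊆ toMeasurable P E := fun x hx => hx.2.1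
      calc (P K).toReal ≤ (P (toMeasurable P E)).toReal := mymono P this
        _ = (P E).toReal := by rw [measure_toMeasurable]
    have h2 : P (G ∩ K) + P (G \ K) = P G := measure_inter_add_diff G hKmeas
    rw [Set.inter_eq_self_of_subset_right Set.inter_subset_left] at h2
    have h3 : (P K).toReal + (P (G \ K)).toReal = (P G).toReal := by
      rw [← ENNReal.toReal_add (measure_ne_top P _) (measure_ne_top P _), h2]
    have h4 : (P G).toReal = (P A).toReal := by rw [hG, measure_toMeasurable]
    linarith


lemma tail_nn (X : Ω → ℝ) (x : ℝ) : 0 ≤ tail P X x := ENNReal.toReal_nonneg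
lemma jtail_nn (X Y : Ω → ℝ) (x y : ℝ) : 0 ≤ jtail P X Y x y := ENNReal.toReal_nonneg

lemma tail_anti (X : Ω → ℝ) {x y : ℝ} (h : x ≤ y) : tail P X y ≤ tail P X x :=
  mymono P (fun ω hω => lt_of_le_of_lt h hω)

lemma jtail_anti (X Y : Ω → ℝ) {x x' y y' : ℝ} (hx : x ≤ x') (hy : y ≤ y') :
    jtail P X Y x' y' ≤ jtail P X Y x y :=
  mymono P (fun ω hω => ⟨lt_of_le_of_lt hx hω.1, lt_of_le_of_lt hy hω.2⟩)

lemma tail_le_sum (X0 X1 : Ω → ℝ) (h1 : ∀ ω, 0 ≤ X1 ω) (x : ℝ) :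
    tail P X0 x ≤ tail P (fun ω => X0 ω + X1 ω) x :=
  mymono P (fun ω hω => lt_of_lt_of_le hω (le_add_of_nonneg_right (h1 ω)))

lemma tail_le_sum' (X0 X1 : Ω → ℝ) (h0 : ∀ ω, 0 ≤ X0 ω) (x : ℝ) :
    tail P X1 x ≤ tail P (fun ω => X0 ω + X1 ω) x :=
  mymono P (fun ω hω => lt_of_lt_of_le hω (le_add_of_nonneg_left (h0 ω)))

lemma jtail_le_sum (X0 X1 Y0 Y1 : Ω → ℝ) (hX : ∀ ω, 0 ≤ X0 ω ∧ 0 ≤ X1 ω)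
    (hY : ∀ ω, 0 ≤ Y0 ω ∧ 0 ≤ Y1 ω) (k l : Fin 2) (x y : ℝ) :
    jtail P (if k = 0 then X0 else X1) (if l = 0 then Y0 else Y1) x y
      ≤ jtail P (fun ω => X0 ω + X1 ω) (fun ω => Y0 ω + Y1 ω) x y := by
  apply mymono P
  intro ω hω
  obtain ⟨h1, h2⟩ := hω
  constructor
  · show X0 ω + X1 ω > x
    split_ifs at h1 <;> nlinarith [(hX ω).1, (hX ω).2]
  · show Y0 ω + Y1 ω > y
    split_ifs at h2 <;> nlinarith [(hY ω).1, (hY ω).2]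

lemma split1 {a0 a1 u h : ℝ} (hu : u < a0 + a1) :
    (u - h < a0) ∨ (u - h < a1) ∨ (h < a1 ∧ u / 2 < a0) ∨ (h < a0 ∧ u / 2 < a1) := by
  rcases le_total a1 a0 with hc | hc
  · rcases le_or_gt a1 h with h1 | h1
    · exact Or.inl (by linarith)
    · exact Or.inr (Or.inr (Or.inl ⟨h1, by linarith⟩))
  · rcases le_or_gt a0 h with h1 | h1
    · exact Or.inr (Or.inl (by linarith))
    · exact Or.inr (Or.inr (Or.inr ⟨h1, by linarith⟩))

lemma split2 {a0 a1 b0 b1 u v h : ℝ} (hu : u < a0 + a1) (hv : v < b0 + b1) :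
    ((u - h < a0 ∧ v - h < b0) ∨ (h < a1 ∧ u/2 < a0 ∧ v/2 < b0) ∨ (h < b1 ∧ u/2 < a0 ∧ v/2 < b0)) ∨
    ((u - h < a0 ∧ v - h < b1) ∨ (h < a1 ∧ u/2 < a0 ∧ v/2 < b1) ∨ (h < b0 ∧ u/2 < a0 ∧ v/2 < b1)) ∨
    ((u - h < a1 ∧ v - h < b0) ∨ (h < a0 ∧ u/2 < a1 ∧ v/2 < b0) ∨ (h < b1 ∧ u/2 < a1 ∧ v/2 < b0)) ∨
    ((u - h < a1 ∧ v - h < b1) ∨ (h < a0 ∧ u/2 < a1 ∧ v/2 < b1) ∨ (h < b0 ∧ u/2 < a1 ∧ v/2 < b1)) := by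
  rcases le_total a1 a0 with hca | hca <;> rcases le_total b1 b0 with hcb | hcb
  · rcases le_or_gt a1 h with h1 | h1
    · rcases le_or_gt b1 h with h2 | h2
      · exact Or.inl (Or.inl ⟨by linarith, by linarith⟩)
      · exact Or.inl (Or.inr (Or.inr ⟨h2, by linarith, by linarith⟩))
    · exact Or.inl (Or.inr (Or.inl ⟨h1, by linarith, by linarith⟩))
  · rcases le_or_gt a1 h with h1 | h1
    · rcases le_or_gt b0 h with h2 | h2
      · exact Or.inr (Or.inl (Or.inl ⟨by linarith, by linarith⟩))
      · exact Or.inr (Or.inl (Or.inr (Or.inr ⟨h2, by linarith, by linarith⟩)))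
    · exact Or.inr (Or.inl (Or.inr (Or.inl ⟨h1, by linarith, by linarith⟩)))
  · rcases le_or_gt a0 h with h1 | h1
    · rcases le_or_gt b1 h with h2 | h2
      · exact Or.inr (Or.inr (Or.inl (Or.inl ⟨by linarith, by linarith⟩)))
      · exact Or.inr (Or.inr (Or.inl (Or.inr (Or.inr ⟨h2, by linarith, by linarith⟩))))
    · exact Or.inr (Or.inr (Or.inl (Or.inr (Or.inl ⟨h1, by linarith, by linarith⟩))))
  · rcases le_or_gt a0 h with h1 | h1
    · rcases le_or_gt b0 h with h2 | h2
      · exact Or.inr (Or.inr (Or.inr (Or.inl ⟨by linarith, by linarith⟩)))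
      · exact Or.inr (Or.inr (Or.inr (Or.inr (Or.inr ⟨h2, by linarith, by linarith⟩))))
    · exact Or.inr (Or.inr (Or.inr (Or.inr (Or.inl ⟨h1, by linarith, by linarith⟩))))

lemma DV_sum_s12 (X0 X1 : Ω → ℝ) (h0 : ∀ ω, 0 ≤ X0 ω) (h1 : ∀ ω, 0 ≤ X1 ω)
    (hd0 : DominatedVarying P X0) (hd1 : DominatedVarying P X1) :
    DominatedVarying P (fun ω => X0 ω + X1 ω) := by
  constructor
  · intro x
    exact lt_of_lt_of_le (hd0.1 x) (tail_le_sum P X0 X1 h1 x)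
  · rintro b ⟨hb0, hb1⟩
    obtain ⟨C0, M0, hC0⟩ := hd0.2 (b/2) ⟨by linarith, by linarith⟩
    obtain ⟨C1, M1, hC1⟩ := hd1.2 (b/2) ⟨by linarith, by linarith⟩
    refine ⟨max C0 0 + max C1 0, max M0 M1, fun x hx => ?_⟩
    have e0 : tail P X0 (b/2 * x) ≤ C0 * tail P X0 x := hC0 x (le_trans (le_max_left _ _) hx)
    have e1 : tail P X1 (b/2 * x) ≤ C1 * tail P X1 x := hC1 x (le_trans (le_max_right _ _) hx)
    have cover : tail P (fun ω => X0 ω + X1 ω) (b*x)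
        ≤ tail P X0 (b/2*x) + tail P X1 (b/2*x) := by
      have hsub : {ω | X0 ω + X1 ω > b*x} ⊆ {ω | X0 ω > b/2*x} ∪ {ω | X1 ω > b/2*x} := by
        intro ω hω
        simp only [Set.mem_setOf_eq, Set.mem_union]
        by_contra hcon
        push_neg at hcon
        have hr : b/2*x + b/2*x = b*x := by ring
        have hω' : X0 ω + X1 ω > b*x := hω
        linarith [hcon.1, hcon.2]
      exact le_trans (mymono P hsub) (myunion P _ _)
    have t0 : tail P X0 x ≤ tail P (fun ω => X0 ω + X1 ω) x := tail_le_sum P X0 X1 h1 x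
    have t1 : tail P X1 x ≤ tail P (fun ω => X0 ω + X1 ω) x := tail_le_sum' P X0 X1 h0 x
    have m0 : C0 * tail P X0 x ≤ max C0 0 * tail P (fun ω => X0 ω + X1 ω) x := by
      calc C0 * tail P X0 x ≤ max C0 0 * tail P X0 x :=
            mul_le_mul_of_nonneg_right (le_max_left _ _) (tail_nn P X0 x)
        _ ≤ max C0 0 * tail P (fun ω => X0 ω + X1 ω) x :=
            mul_le_mul_of_nonneg_left t0 (le_max_right _ _)
    have m1 : C1 * tail P X1 x ≤ max C1 0 * tail P (fun ω => X0 ω + X1 ω) x := by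
      calc C1 * tail P X1 x ≤ max C1 0 * tail P X1 x :=
            mul_le_mul_of_nonneg_right (le_max_left _ _) (tail_nn P X1 x)
        _ ≤ max C1 0 * tail P (fun ω => X0 ω + X1 ω) x :=
            mul_le_mul_of_nonneg_left t1 (le_max_right _ _)
    have : (max C0 0 + max C1 0) * tail P (fun ω => X0 ω + X1 ω) x
        = max C0 0 * tail P (fun ω => X0 ω + X1 ω) x
          + max C1 0 * tail P (fun ω => X0 ω + X1 ω) x := by ring
    linarith

lemma L_sum (X0 X1 : Ω → ℝ) (h0 : ∀ ω, 0 ≤ X0 ω) (h1 : ∀ ω, 0 ≤ X1 ω)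
    (hd0 : DominatedVarying P X0) (hd1 : DominatedVarying P X1)
    (hl0 : LongTailed P X0) (hl1 : LongTailed P X1)
    (c10 : ∀ ε > (0:ℝ), ∃ M : ℝ, ∀ u v : ℝ, M ≤ min u v →
      (P {ω | X1 ω > u ∧ X0 ω > v}).toReal ≤ ε * tail P X0 v)
    (c01 : ∀ ε > (0:ℝ), ∃ M : ℝ, ∀ u v : ℝ, M ≤ min u v →
      (P {ω | X0 ω > u ∧ X1 ω > v}).toReal ≤ ε * tail P X1 v) :
    LongTailed P (fun ω => X0 ω + X1 ω) := by
  have pos : ∀ x, 0 < tail P (fun ω => X0 ω + X1 ω) x :=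
    fun x => lt_of_lt_of_le (hd0.1 x) (tail_le_sum P X0 X1 h1 x)
  refine ⟨pos, fun a ha => ?_⟩
  rw [Metric.tendsto_atTop]
  intro ε₀ hε₀
  obtain ⟨C0, M0, hC0⟩ := hd0.2 (1/4) ⟨by norm_num, by norm_num⟩
  obtain ⟨C1, M1, hC1⟩ := hd1.2 (1/4) ⟨by norm_num, by norm_num⟩
  set Cp := max (max C0 C1) 0 with hCpdef
  have hCp0 : (0:ℝ) ≤ Cp := le_max_right _ _
  have hden : (0:ℝ) < 3 + 2*Cp := by linarith
  set ε := ε₀ / (3 + 2*Cp) with hed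
  have hε : 0 < ε := div_pos hε₀ hden
  have key : ε * (2 + 2*Cp) < ε₀ := by
    rw [hed, div_mul_eq_mul_div, div_lt_iff₀ hden]; nlinarith
  obtain ⟨Mg1, hg1⟩ := c10 ε hε
  obtain ⟨Mg2, hg2⟩ := c01 ε hε
  set h := max 1 (max Mg1 Mg2) with hhdef
  have hh1 : (1:ℝ) ≤ h := le_max_left _ _
  have hhg1 : Mg1 ≤ h := le_trans (le_max_left _ _) (le_max_right _ _)
  have hhg2 : Mg2 ≤ h := le_trans (le_max_right _ _) (le_max_right _ _)
  obtain ⟨N0, hN0⟩ := Metric.tendsto_atTop.1 (hl0.2 (a+h) (by linarith)) ε hε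
  obtain ⟨N1, hN1⟩ := Metric.tendsto_atTop.1 (hl1.2 (a+h) (by linarith)) ε hε
  refine ⟨max (max N0 N1) (max (max M0 M1)
    (max (2*Mg1 + 2*a + 2) (max (2*Mg2 + 2*a + 2) (2*a + 2)))), fun x hx => ?_⟩
  have hxN0 : N0 ≤ x := le_trans (le_trans (le_max_left _ _) (le_max_left _ _)) hx
  have hxN1 : N1 ≤ x := le_trans (le_trans (le_max_right _ _) (le_max_left _ _)) hx
  have hxM0 : M0 ≤ x := le_trans (le_trans (le_trans (le_max_left _ _) (le_max_left _ _)) (le_max_right _ _)) hx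
  have hxM1 : M1 ≤ x := le_trans (le_trans (le_trans (le_max_right _ _) (le_max_left _ _)) (le_max_right _ _)) hx
  have hxG1 : 2*Mg1 + 2*a + 2 ≤ x := le_trans (le_trans (le_trans (le_max_left _ _) (le_max_right _ _)) (le_max_right _ _)) hx
  have hxG2 : 2*Mg2 + 2*a + 2 ≤ x := le_trans (le_trans (le_trans (le_trans (le_max_left _ _) (le_max_right _ _)) (le_max_right _ _)) (le_max_right _ _)) hx
  have hxa : 2*a + 2 ≤ x := le_trans (le_trans (le_trans (le_trans (le_max_right _ _) (le_max_right _ _)) (le_max_right _ _)) (le_max_right _ _)) hx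
  -- long-tail bounds on the main pieces
  have hA0 : tail P X0 (x-(a+h)) ≤ (1+ε) * tail P X0 x := by
    have hd := hN0 x hxN0
    rw [Real.dist_eq] at hd
    have h2 := (abs_lt.1 hd).2
    have hp := hl0.1 x
    exact le_of_lt ((div_lt_iff₀ hp).1 (by linarith))
  have hA1 : tail P X1 (x-(a+h)) ≤ (1+ε) * tail P X1 x := by
    have hd := hN1 x hxN1
    rw [Real.dist_eq] at hd
    have h2 := (abs_lt.1 hd).2
    have hp := hl1.1 x
    exact le_of_lt ((div_lt_iff₀ hp).1 (by linarith))
  -- hull pieces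
  obtain ⟨R0, hR0sub, hR0⟩ := hull_piece P {ω | X0 ω > x-(a+h)} {ω | X0 ω > x}
    {ω | X0 ω + X1 ω > x}
    (fun ω hω => by simp only [Set.mem_setOf_eq] at hω ⊢; linarith)
    (fun ω hω => by simp only [Set.mem_setOf_eq] at hω ⊢; have := h1 ω; linarith)
  obtain ⟨R1, hR1sub, hR1⟩ := hull_piece P {ω | X1 ω > x-(a+h)} {ω | X1 ω > x}
    {ω | X0 ω + X1 ω > x}
    (fun ω hω => by simp only [Set.mem_setOf_eq] at hω ⊢; linarith)
    (fun ω hω => by simp only [Set.mem_setOf_eq] at hω ⊢; have := h0 ω; linarith)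
  have hR0' : (P R0).toReal ≤ ε * tail P X0 x := by
    have e1 : (P {ω | X0 ω > x-(a+h)}).toReal = tail P X0 (x-(a+h)) := rfl
    have e2 : (P {ω | X0 ω > x}).toReal = tail P X0 x := rfl
    rw [e1, e2] at hR0
    have : (1+ε) * tail P X0 x - tail P X0 x = ε * tail P X0 x := by ring
    linarith
  have hR1' : (P R1).toReal ≤ ε * tail P X1 x := by
    have e1 : (P {ω | X1 ω > x-(a+h)}).toReal = tail P X1 (x-(a+h)) := rfl
    have e2 : (P {ω | X1 ω > x}).toReal = tail P X1 x := rfl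
    rw [e1, e2] at hR1
    have : (1+ε) * tail P X1 x - tail P X1 x = ε * tail P X1 x := by ring
    linarith
  -- cross bounds
  have hB : (P {ω | X1 ω > h ∧ X0 ω > (x-a)/2}).toReal ≤ ε * Cp * tail P X0 x := by
    have step1 := hg1 h ((x-a)/2) (le_min hhg1 (by linarith))
    have step2 : tail P X0 ((x-a)/2) ≤ tail P X0 (1/4 * x) := tail_anti P X0 (by linarith)
    have step3 : tail P X0 (1/4 * x) ≤ C0 * tail P X0 x := hC0 x hxM0
    have step4 : C0 * tail P X0 x ≤ Cp * tail P X0 x :=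
      mul_le_mul_of_nonneg_right (le_trans (le_max_left _ _) (le_max_left _ _)) (tail_nn P X0 x)
    calc (P {ω | X1 ω > h ∧ X0 ω > (x-a)/2}).toReal ≤ ε * tail P X0 ((x-a)/2) := step1
      _ ≤ ε * (Cp * tail P X0 x) :=
          mul_le_mul_of_nonneg_left (le_trans step2 (le_trans step3 step4)) (le_of_lt hε)
      _ = ε * Cp * tail P X0 x := by ring
  have hC : (P {ω | X0 ω > h ∧ X1 ω > (x-a)/2}).toReal ≤ ε * Cp * tail P X1 x := by
    have step1 := hg2 h ((x-a)/2) (le_min hhg2 (by linarith))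
    have step2 : tail P X1 ((x-a)/2) ≤ tail P X1 (1/4 * x) := tail_anti P X1 (by linarith)
    have step3 : tail P X1 (1/4 * x) ≤ C1 * tail P X1 x := hC1 x hxM1
    have step4 : C1 * tail P X1 x ≤ Cp * tail P X1 x :=
      mul_le_mul_of_nonneg_right (le_trans (le_max_right _ _) (le_max_left _ _)) (tail_nn P X1 x)
    calc (P {ω | X0 ω > h ∧ X1 ω > (x-a)/2}).toReal ≤ ε * tail P X1 ((x-a)/2) := step1
      _ ≤ ε * (Cp * tail P X1 x) :=
          mul_le_mul_of_nonneg_left (le_trans step2 (le_trans step3 step4)) (le_of_lt hε)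
      _ = ε * Cp * tail P X1 x := by ring
  -- covering inclusion
  have cover : {ω | X0 ω + X1 ω > x-a} ⊆
      toMeasurable P {ω | X0 ω + X1 ω > x} ∪ (R0 ∪ (R1 ∪
        ({ω | X1 ω > h ∧ X0 ω > (x-a)/2} ∪ {ω | X0 ω > h ∧ X1 ω > (x-a)/2}))) := by
    intro ω hω
    have hs := split1 (a0 := X0 ω) (a1 := X1 ω) (u := x-a) (h := h) hω
    simp only [Set.mem_union, Set.mem_setOf_eq]
    rcases hs with h' | h' | h' | h'
    · rcases hR0sub (show X0 ω > x-(a+h) by linarith) with hw | hr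
      · exact Or.inl hw
      · exact Or.inr (Or.inl hr)
    · rcases hR1sub (show X1 ω > x-(a+h) by linarith) with hw | hr
      · exact Or.inl hw
      · exact Or.inr (Or.inr (Or.inl hr))
    · exact Or.inr (Or.inr (Or.inr (Or.inl h')))
    · exact Or.inr (Or.inr (Or.inr (Or.inr h')))
  have main : tail P (fun ω => X0 ω + X1 ω) (x-a)
      ≤ tail P (fun ω => X0 ω + X1 ω) x + (ε * tail P X0 x + (ε * tail P X1 x +
          (ε * Cp * tail P X0 x + ε * Cp * tail P X1 x))) := by
    refine le_trans (mymono P cover) ?_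
    refine mychain P ?_ (mychain P hR0' (mychain P hR1' (mychain P hB hC)))
    exact le_of_eq (by rw [measure_toMeasurable]; rfl)
  -- final computation
  have t0 : tail P X0 x ≤ tail P (fun ω => X0 ω + X1 ω) x := tail_le_sum P X0 X1 h1 x
  have t1 : tail P X1 x ≤ tail P (fun ω => X0 ω + X1 ω) x := tail_le_sum' P X0 X1 h0 x
  have hTS := pos x
  have hmono : tail P (fun ω => X0 ω + X1 ω) x ≤ tail P (fun ω => X0 ω + X1 ω) (x-a) :=
    tail_anti P _ (by linarith)
  rw [Real.dist_eq, abs_of_nonneg (by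
    have := (one_le_div hTS).2 hmono
    linarith)]
  rw [sub_lt_iff_lt_add, div_lt_iff₀ hTS]
  have kp := mul_lt_mul_of_pos_right key hTS
  have p1 : ε * tail P X0 x ≤ ε * tail P (fun ω => X0 ω + X1 ω) x :=
    mul_le_mul_of_nonneg_left t0 (le_of_lt hε)
  have p2 : ε * tail P X1 x ≤ ε * tail P (fun ω => X0 ω + X1 ω) x :=
    mul_le_mul_of_nonneg_left t1 (le_of_lt hε)
  have p3 : ε * Cp * tail P X0 x ≤ ε * Cp * tail P (fun ω => X0 ω + X1 ω) x :=
    mul_le_mul_of_nonneg_left t0 (mul_nonneg (le_of_lt hε) hCp0)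
  have p4 : ε * Cp * tail P X1 x ≤ ε * Cp * tail P (fun ω => X0 ω + X1 ω) x :=
    mul_le_mul_of_nonneg_left t1 (mul_nonneg (le_of_lt hε) hCp0)
  have exp1 : ε * (2 + 2*Cp) * tail P (fun ω => X0 ω + X1 ω) x
      = ε * tail P (fun ω => X0 ω + X1 ω) x + ε * tail P (fun ω => X0 ω + X1 ω) x
        + ε * Cp * tail P (fun ω => X0 ω + X1 ω) x
        + ε * Cp * tail P (fun ω => X0 ω + X1 ω) x := by ring
  have exp2 : (ε₀ + 1) * tail P (fun ω => X0 ω + X1 ω) x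
      = ε₀ * tail P (fun ω => X0 ω + X1 ω) x + tail P (fun ω => X0 ω + X1 ω) x := by ring
  linarith

lemma jtail_comp_le (U V X0 X1 Y0 Y1 : Ω → ℝ)
    (hU : ∀ ω, U ω ≤ X0 ω + X1 ω) (hV : ∀ ω, V ω ≤ Y0 ω + Y1 ω) (x y : ℝ) :
    jtail P U V x y ≤ jtail P (fun ω => X0 ω + X1 ω) (fun ω => Y0 ω + Y1 ω) x y :=
  mymono P (fun ω hω => ⟨lt_of_lt_of_le hω.1 (hU ω), lt_of_lt_of_le hω.2 (hV ω)⟩)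

lemma jointD_sum (X0 X1 Y0 Y1 : Ω → ℝ)
    (hX0 : ∀ ω, 0 ≤ X0 ω) (hX1 : ∀ ω, 0 ≤ X1 ω) (hY0 : ∀ ω, 0 ≤ Y0 ω) (hY1 : ∀ ω, 0 ≤ Y1 ω)
    (hD00 : PairD P X0 Y0) (hD01 : PairD P X0 Y1) (hD10 : PairD P X1 Y0) (hD11 : PairD P X1 Y1) :
    ∀ b₁ ∈ Set.Ioo (0:ℝ) 1, ∀ b₂ ∈ Set.Ioo (0:ℝ) 1, ∃ C M : ℝ, ∀ x y : ℝ, M ≤ min x y →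
      jtail P (fun ω => X0 ω + X1 ω) (fun ω => Y0 ω + Y1 ω) (b₁ * x) (b₂ * y)
        ≤ C * jtail P (fun ω => X0 ω + X1 ω) (fun ω => Y0 ω + Y1 ω) x y := by
  rintro b1 ⟨hb10, hb11⟩ b2 ⟨hb20, hb21⟩
  obtain ⟨C00, M00, h00⟩ := hD00.2.2.2 (b1/2) ⟨by linarith, by linarith⟩ (b2/2) ⟨by linarith, by linarith⟩
  obtain ⟨C01, M01, h01⟩ := hD01.2.2.2 (b1/2) ⟨by linarith, by linarith⟩ (b2/2) ⟨by linarith, by linarith⟩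
  obtain ⟨C10, M10, h10⟩ := hD10.2.2.2 (b1/2) ⟨by linarith, by linarith⟩ (b2/2) ⟨by linarith, by linarith⟩
  obtain ⟨C11, M11, h11⟩ := hD11.2.2.2 (b1/2) ⟨by linarith, by linarith⟩ (b2/2) ⟨by linarith, by linarith⟩
  refine ⟨max C00 0 + max C01 0 + max C10 0 + max C11 0,
    max (max M00 M01) (max M10 M11), fun x y hm => ?_⟩
  have hm00 : M00 ≤ min x y := le_trans (le_trans (le_max_left _ _) (le_max_left _ _)) hm
  have hm01 : M01 ≤ min x y := le_trans (le_trans (le_max_right _ _) (le_max_left _ _)) hm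
  have hm10 : M10 ≤ min x y := le_trans (le_trans (le_max_left _ _) (le_max_right _ _)) hm
  have hm11 : M11 ≤ min x y := le_trans (le_trans (le_max_right _ _) (le_max_right _ _)) hm
  have cover : jtail P (fun ω => X0 ω + X1 ω) (fun ω => Y0 ω + Y1 ω) (b1 * x) (b2 * y)
      ≤ jtail P X0 Y0 (b1/2*x) (b2/2*y) + (jtail P X0 Y1 (b1/2*x) (b2/2*y)
        + (jtail P X1 Y0 (b1/2*x) (b2/2*y) + jtail P X1 Y1 (b1/2*x) (b2/2*y))) := by
    have hsub : {ω | X0 ω + X1 ω > b1*x ∧ Y0 ω + Y1 ω > b2*y}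
        ⊆ {ω | X0 ω > b1/2*x ∧ Y0 ω > b2/2*y} ∪ ({ω | X0 ω > b1/2*x ∧ Y1 ω > b2/2*y}
          ∪ ({ω | X1 ω > b1/2*x ∧ Y0 ω > b2/2*y} ∪ {ω | X1 ω > b1/2*x ∧ Y1 ω > b2/2*y})) := by
      intro ω hω
      obtain ⟨hu, hv⟩ := hω
      have hrx : b1/2*x + b1/2*x = b1*x := by ring
      have hry : b2/2*y + b2/2*y = b2*y := by ring
      simp only [Set.mem_union, Set.mem_setOf_eq]
      rcases le_total (X1 ω) (X0 ω) with hcx | hcx <;> rcases le_total (Y1 ω) (Y0 ω) with hcy | hcy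
      · exact Or.inl ⟨by linarith, by linarith⟩
      · exact Or.inr (Or.inl ⟨by linarith, by linarith⟩)
      · exact Or.inr (Or.inr (Or.inl ⟨by linarith, by linarith⟩))
      · exact Or.inr (Or.inr (Or.inr ⟨by linarith, by linarith⟩))
    exact le_trans (mymono P hsub) (mychain P le_rfl (mychain P le_rfl (mychain P le_rfl le_rfl)))
  have j00 : jtail P X0 Y0 x y ≤ jtail P (fun ω => X0 ω + X1 ω) (fun ω => Y0 ω + Y1 ω) x y :=
    jtail_comp_le P X0 Y0 X0 X1 Y0 Y1 (fun ω => le_add_of_nonneg_right (hX1 ω))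
      (fun ω => le_add_of_nonneg_right (hY1 ω)) x y
  have j01 : jtail P X0 Y1 x y ≤ jtail P (fun ω => X0 ω + X1 ω) (fun ω => Y0 ω + Y1 ω) x y :=
    jtail_comp_le P X0 Y1 X0 X1 Y0 Y1 (fun ω => le_add_of_nonneg_right (hX1 ω))
      (fun ω => le_add_of_nonneg_left (hY0 ω)) x y
  have j10 : jtail P X1 Y0 x y ≤ jtail P (fun ω => X0 ω + X1 ω) (fun ω => Y0 ω + Y1 ω) x y :=
    jtail_comp_le P X1 Y0 X0 X1 Y0 Y1 (fun ω => le_add_of_nonneg_left (hX0 ω))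
      (fun ω => le_add_of_nonneg_right (hY1 ω)) x y
  have j11 : jtail P X1 Y1 x y ≤ jtail P (fun ω => X0 ω + X1 ω) (fun ω => Y0 ω + Y1 ω) x y :=
    jtail_comp_le P X1 Y1 X0 X1 Y0 Y1 (fun ω => le_add_of_nonneg_left (hX0 ω))
      (fun ω => le_add_of_nonneg_left (hY0 ω)) x y
  have e00 : jtail P X0 Y0 (b1/2*x) (b2/2*y) ≤ max C00 0 * jtail P (fun ω => X0 ω + X1 ω) (fun ω => Y0 ω + Y1 ω) x y := by
    calc jtail P X0 Y0 (b1/2*x) (b2/2*y) ≤ C00 * jtail P X0 Y0 x y := h00 x y hm00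
      _ ≤ max C00 0 * jtail P X0 Y0 x y :=
          mul_le_mul_of_nonneg_right (le_max_left _ _) (jtail_nn P X0 Y0 x y)
      _ ≤ _ := mul_le_mul_of_nonneg_left j00 (le_max_right _ _)
  have e01 : jtail P X0 Y1 (b1/2*x) (b2/2*y) ≤ max C01 0 * jtail P (fun ω => X0 ω + X1 ω) (fun ω => Y0 ω + Y1 ω) x y := by
    calc jtail P X0 Y1 (b1/2*x) (b2/2*y) ≤ C01 * jtail P X0 Y1 x y := h01 x y hm01
      _ ≤ max C01 0 * jtail P X0 Y1 x y :=
          mul_le_mul_of_nonneg_right (le_max_left _ _) (jtail_nn P X0 Y1 x y)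
      _ ≤ _ := mul_le_mul_of_nonneg_left j01 (le_max_right _ _)
  have e10 : jtail P X1 Y0 (b1/2*x) (b2/2*y) ≤ max C10 0 * jtail P (fun ω => X0 ω + X1 ω) (fun ω => Y0 ω + Y1 ω) x y := by
    calc jtail P X1 Y0 (b1/2*x) (b2/2*y) ≤ C10 * jtail P X1 Y0 x y := h10 x y hm10
      _ ≤ max C10 0 * jtail P X1 Y0 x y :=
          mul_le_mul_of_nonneg_right (le_max_left _ _) (jtail_nn P X1 Y0 x y)
      _ ≤ _ := mul_le_mul_of_nonneg_left j10 (le_max_right _ _)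
  have e11 : jtail P X1 Y1 (b1/2*x) (b2/2*y) ≤ max C11 0 * jtail P (fun ω => X0 ω + X1 ω) (fun ω => Y0 ω + Y1 ω) x y := by
    calc jtail P X1 Y1 (b1/2*x) (b2/2*y) ≤ C11 * jtail P X1 Y1 x y := h11 x y hm11
      _ ≤ max C11 0 * jtail P X1 Y1 x y :=
          mul_le_mul_of_nonneg_right (le_max_left _ _) (jtail_nn P X1 Y1 x y)
      _ ≤ _ := mul_le_mul_of_nonneg_left j11 (le_max_right _ _)
  have exp : (max C00 0 + max C01 0 + max C10 0 + max C11 0) * jtail P (fun ω => X0 ω + X1 ω) (fun ω => Y0 ω + Y1 ω) x y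
      = max C00 0 * jtail P (fun ω => X0 ω + X1 ω) (fun ω => Y0 ω + Y1 ω) x y
        + max C01 0 * jtail P (fun ω => X0 ω + X1 ω) (fun ω => Y0 ω + Y1 ω) x y
        + max C10 0 * jtail P (fun ω => X0 ω + X1 ω) (fun ω => Y0 ω + Y1 ω) x y
        + max C11 0 * jtail P (fun ω => X0 ω + X1 ω) (fun ω => Y0 ω + Y1 ω) x y := by ring
  linarith

lemma jointL_sum (X0 X1 Y0 Y1 : Ω → ℝ)
    (hX0 : ∀ ω, 0 ≤ X0 ω) (hX1 : ∀ ω, 0 ≤ X1 ω) (hY0 : ∀ ω, 0 ≤ Y0 ω) (hY1 : ∀ ω, 0 ≤ Y1 ω)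
    (hL00 : PairL P X0 Y0) (hL01 : PairL P X0 Y1) (hL10 : PairL P X1 Y0) (hL11 : PairL P X1 Y1)
    (hD00 : PairD P X0 Y0) (hD01 : PairD P X0 Y1) (hD10 : PairD P X1 Y0) (hD11 : PairD P X1 Y1)
    (gB00 : ∀ ε > (0:ℝ), ∃ M : ℝ, ∀ t u v : ℝ, M ≤ min t (min u v) →
      (P {ω | X1 ω > t ∧ X0 ω > u ∧ Y0 ω > v}).toReal ≤ ε * jtail P X0 Y0 u v)
    (gB01 : ∀ ε > (0:ℝ), ∃ M : ℝ, ∀ t u v : ℝ, M ≤ min t (min u v) →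
      (P {ω | X1 ω > t ∧ X0 ω > u ∧ Y1 ω > v}).toReal ≤ ε * jtail P X0 Y1 u v)
    (gB10 : ∀ ε > (0:ℝ), ∃ M : ℝ, ∀ t u v : ℝ, M ≤ min t (min u v) →
      (P {ω | X0 ω > t ∧ X1 ω > u ∧ Y0 ω > v}).toReal ≤ ε * jtail P X1 Y0 u v)
    (gB11 : ∀ ε > (0:ℝ), ∃ M : ℝ, ∀ t u v : ℝ, M ≤ min t (min u v) →
      (P {ω | X0 ω > t ∧ X1 ω > u ∧ Y1 ω > v}).toReal ≤ ε * jtail P X1 Y1 u v)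
    (gC00 : ∀ ε > (0:ℝ), ∃ M : ℝ, ∀ t u v : ℝ, M ≤ min t (min u v) →
      (P {ω | Y1 ω > t ∧ X0 ω > u ∧ Y0 ω > v}).toReal ≤ ε * jtail P X0 Y0 u v)
    (gC01 : ∀ ε > (0:ℝ), ∃ M : ℝ, ∀ t u v : ℝ, M ≤ min t (min u v) →
      (P {ω | Y0 ω > t ∧ X0 ω > u ∧ Y1 ω > v}).toReal ≤ ε * jtail P X0 Y1 u v)
    (gC10 : ∀ ε > (0:ℝ), ∃ M : ℝ, ∀ t u v : ℝ, M ≤ min t (min u v) →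
      (P {ω | Y1 ω > t ∧ X1 ω > u ∧ Y0 ω > v}).toReal ≤ ε * jtail P X1 Y0 u v)
    (gC11 : ∀ ε > (0:ℝ), ∃ M : ℝ, ∀ t u v : ℝ, M ≤ min t (min u v) →
      (P {ω | Y0 ω > t ∧ X1 ω > u ∧ Y1 ω > v}).toReal ≤ ε * jtail P X1 Y1 u v) :
    ∀ a₁ a₂ : ℝ, 0 ≤ a₁ → 0 ≤ a₂ → TendstoMin (fun x y =>
      jtail P (fun ω => X0 ω + X1 ω) (fun ω => Y0 ω + Y1 ω) (x - a₁) (y - a₂) /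
      jtail P (fun ω => X0 ω + X1 ω) (fun ω => Y0 ω + Y1 ω) x y) 1 := by
  intro a1 a2 ha1 ha2 ε₀ hε₀
  obtain ⟨C00, M00, hq00⟩ := hD00.2.2.2 (1/4) ⟨by norm_num, by norm_num⟩ (1/4) ⟨by norm_num, by norm_num⟩
  obtain ⟨C01, M01, hq01⟩ := hD01.2.2.2 (1/4) ⟨by norm_num, by norm_num⟩ (1/4) ⟨by norm_num, by norm_num⟩
  obtain ⟨C10, M10, hq10⟩ := hD10.2.2.2 (1/4) ⟨by norm_num, by norm_num⟩ (1/4) ⟨by norm_num, by norm_num⟩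
  obtain ⟨C11, M11, hq11⟩ := hD11.2.2.2 (1/4) ⟨by norm_num, by norm_num⟩ (1/4) ⟨by norm_num, by norm_num⟩
  set Cp := max (max (max C00 C01) (max C10 C11)) 0 with hCpdef
  have hCp0 : (0:ℝ) ≤ Cp := le_max_right _ _
  have hC00p : C00 ≤ Cp := le_trans (le_trans (le_max_left _ _) (le_max_left _ _)) (le_max_left _ _)
  have hC01p : C01 ≤ Cp := le_trans (le_trans (le_max_right _ _) (le_max_left _ _)) (le_max_left _ _)
  have hC10p : C10 ≤ Cp := le_trans (le_trans (le_max_left _ _) (le_max_right _ _)) (le_max_left _ _)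
  have hC11p : C11 ≤ Cp := le_trans (le_trans (le_max_right _ _) (le_max_right _ _)) (le_max_left _ _)
  have hden : (0:ℝ) < 5 + 8*Cp := by linarith
  set ε := ε₀ / (5 + 8*Cp) with hed
  have hε : 0 < ε := div_pos hε₀ hden
  have key : ε * (4 + 8*Cp) < ε₀ := by
    rw [hed, div_mul_eq_mul_div, div_lt_iff₀ hden]; nlinarith
  obtain ⟨MB00, hgB00⟩ := gB00 ε hε
  obtain ⟨MB01, hgB01⟩ := gB01 ε hε
  obtain ⟨MB10, hgB10⟩ := gB10 ε hε
  obtain ⟨MB11, hgB11⟩ := gB11 ε hε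
  obtain ⟨MC00, hgC00⟩ := gC00 ε hε
  obtain ⟨MC01, hgC01⟩ := gC01 ε hε
  obtain ⟨MC10, hgC10⟩ := gC10 ε hε
  obtain ⟨MC11, hgC11⟩ := gC11 ε hε
  set h := max 1 (max (max (max MB00 MB01) (max MB10 MB11)) (max (max MC00 MC01) (max MC10 MC11))) with hhdef
  have hh1 : (1:ℝ) ≤ h := le_max_left _ _
  have hB00h : MB00 ≤ h := le_sup_of_le_right (le_sup_of_le_left (le_sup_of_le_left le_sup_left))
  have hB01h : MB01 ≤ h := le_sup_of_le_right (le_sup_of_le_left (le_sup_of_le_left le_sup_right))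
  have hB10h : MB10 ≤ h := le_sup_of_le_right (le_sup_of_le_left (le_sup_of_le_right le_sup_left))
  have hB11h : MB11 ≤ h := le_sup_of_le_right (le_sup_of_le_left (le_sup_of_le_right le_sup_right))
  have hC00h : MC00 ≤ h := le_sup_of_le_right (le_sup_of_le_right (le_sup_of_le_left le_sup_left))
  have hC01h : MC01 ≤ h := le_sup_of_le_right (le_sup_of_le_right (le_sup_of_le_left le_sup_right))
  have hC10h : MC10 ≤ h := le_sup_of_le_right (le_sup_of_le_right (le_sup_of_le_right le_sup_left))
  have hC11h : MC11 ≤ h := le_sup_of_le_right (le_sup_of_le_right (le_sup_of_le_right le_sup_right))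
  obtain ⟨ML00, hr00⟩ := hL00.2.2.2 (a1+h) (a2+h) (by linarith) (by linarith) ε hε
  obtain ⟨ML01, hr01⟩ := hL01.2.2.2 (a1+h) (a2+h) (by linarith) (by linarith) ε hε
  obtain ⟨ML10, hr10⟩ := hL10.2.2.2 (a1+h) (a2+h) (by linarith) (by linarith) ε hε
  obtain ⟨ML11, hr11⟩ := hL11.2.2.2 (a1+h) (a2+h) (by linarith) (by linarith) ε hε
  refine ⟨max (max (max ML00 ML01) (max ML10 ML11))
    (max (max (max M00 M01) (max M10 M11)) (2*h + 2*a1 + 2*a2 + 2)), fun x y hm => ?_⟩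
  have hmx : max (max (max ML00 ML01) (max ML10 ML11))
      (max (max (max M00 M01) (max M10 M11)) (2*h + 2*a1 + 2*a2 + 2)) ≤ x :=
    le_trans hm (min_le_left _ _)
  have hmy : max (max (max ML00 ML01) (max ML10 ML11))
      (max (max (max M00 M01) (max M10 M11)) (2*h + 2*a1 + 2*a2 + 2)) ≤ y :=
    le_trans hm (min_le_right _ _)
  have hML00 : ML00 ≤ min x y := le_trans (le_sup_of_le_left (le_sup_of_le_left le_sup_left)) hm
  have hML01 : ML01 ≤ min x y := le_trans (le_sup_of_le_left (le_sup_of_le_left le_sup_right)) hm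
  have hML10 : ML10 ≤ min x y := le_trans (le_sup_of_le_left (le_sup_of_le_right le_sup_left)) hm
  have hML11 : ML11 ≤ min x y := le_trans (le_sup_of_le_left (le_sup_of_le_right le_sup_right)) hm
  have hM00 : M00 ≤ min x y := le_trans (le_sup_of_le_right (le_sup_of_le_left (le_sup_of_le_left le_sup_left))) hm
  have hM01 : M01 ≤ min x y := le_trans (le_sup_of_le_right (le_sup_of_le_left (le_sup_of_le_left le_sup_right))) hm
  have hM10 : M10 ≤ min x y := le_trans (le_sup_of_le_right (le_sup_of_le_left (le_sup_of_le_right le_sup_left))) hm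
  have hM11 : M11 ≤ min x y := le_trans (le_sup_of_le_right (le_sup_of_le_left (le_sup_of_le_right le_sup_right))) hm
  have hbig : 2*h + 2*a1 + 2*a2 + 2 ≤ min x y := le_trans (le_sup_of_le_right le_sup_right) hm
  have hbigx : 2*h + 2*a1 + 2*a2 + 2 ≤ x := le_trans hbig (min_le_left _ _)
  have hbigy : 2*h + 2*a1 + 2*a2 + 2 ≤ y := le_trans hbig (min_le_right _ _)
  -- thresholds for the cross terms
  have hcu : h ≤ (x - a1)/2 := by linarith
  have hcv : h ≤ (y - a2)/2 := by linarith
  -- long-tailedness of the pieces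
  have hA00 : jtail P X0 Y0 (x-(a1+h)) (y-(a2+h)) ≤ (1+ε) * jtail P X0 Y0 x y := by
    have hd := hr00 x y hML00
    simp only [] at hd
    have h2 := (abs_lt.1 hd).2
    have hp := hD00.2.2.1 x y
    exact le_of_lt ((div_lt_iff₀ hp).1 (by linarith))
  have hA01 : jtail P X0 Y1 (x-(a1+h)) (y-(a2+h)) ≤ (1+ε) * jtail P X0 Y1 x y := by
    have hd := hr01 x y hML01
    simp only [] at hd
    have h2 := (abs_lt.1 hd).2
    have hp := hD01.2.2.1 x y
    exact le_of_lt ((div_lt_iff₀ hp).1 (by linarith))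
  have hA10 : jtail P X1 Y0 (x-(a1+h)) (y-(a2+h)) ≤ (1+ε) * jtail P X1 Y0 x y := by
    have hd := hr10 x y hML10
    simp only [] at hd
    have h2 := (abs_lt.1 hd).2
    have hp := hD10.2.2.1 x y
    exact le_of_lt ((div_lt_iff₀ hp).1 (by linarith))
  have hA11 : jtail P X1 Y1 (x-(a1+h)) (y-(a2+h)) ≤ (1+ε) * jtail P X1 Y1 x y := by
    have hd := hr11 x y hML11
    simp only [] at hd
    have h2 := (abs_lt.1 hd).2
    have hp := hD11.2.2.1 x y
    exact le_of_lt ((div_lt_iff₀ hp).1 (by linarith))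
  -- comparisons of pair jtails with the sums' jtail
  have j00 : jtail P X0 Y0 x y ≤ jtail P (fun ω => X0 ω + X1 ω) (fun ω => Y0 ω + Y1 ω) x y :=
    jtail_comp_le P X0 Y0 X0 X1 Y0 Y1 (fun ω => le_add_of_nonneg_right (hX1 ω))
      (fun ω => le_add_of_nonneg_right (hY1 ω)) x y
  have j01 : jtail P X0 Y1 x y ≤ jtail P (fun ω => X0 ω + X1 ω) (fun ω => Y0 ω + Y1 ω) x y :=
    jtail_comp_le P X0 Y1 X0 X1 Y0 Y1 (fun ω => le_add_of_nonneg_right (hX1 ω))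
      (fun ω => le_add_of_nonneg_left (hY0 ω)) x y
  have j10 : jtail P X1 Y0 x y ≤ jtail P (fun ω => X0 ω + X1 ω) (fun ω => Y0 ω + Y1 ω) x y :=
    jtail_comp_le P X1 Y0 X0 X1 Y0 Y1 (fun ω => le_add_of_nonneg_left (hX0 ω))
      (fun ω => le_add_of_nonneg_right (hY1 ω)) x y
  have j11 : jtail P X1 Y1 x y ≤ jtail P (fun ω => X0 ω + X1 ω) (fun ω => Y0 ω + Y1 ω) x y :=
    jtail_comp_le P X1 Y1 X0 X1 Y0 Y1 (fun ω => le_add_of_nonneg_left (hX0 ω))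
      (fun ω => le_add_of_nonneg_left (hY0 ω)) x y
  -- hull pieces for the four main corner sets
  obtain ⟨R00, hR00sub, hR00⟩ := hull_piece P {ω | X0 ω > x-(a1+h) ∧ Y0 ω > y-(a2+h)}
    {ω | X0 ω > x ∧ Y0 ω > y} {ω | X0 ω + X1 ω > x ∧ Y0 ω + Y1 ω > y}
    (fun ω hω => ⟨by have h1 : X0 ω > x := hω.1; linarith, by have h2 : Y0 ω > y := hω.2; linarith⟩)
    (fun ω hω => ⟨show X0 ω + X1 ω > x by have h1 : X0 ω > x := hω.1; have := hX1 ω; linarith,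
      show Y0 ω + Y1 ω > y by have h2 : Y0 ω > y := hω.2; have := hY1 ω; linarith⟩)
  obtain ⟨R01, hR01sub, hR01⟩ := hull_piece P {ω | X0 ω > x-(a1+h) ∧ Y1 ω > y-(a2+h)}
    {ω | X0 ω > x ∧ Y1 ω > y} {ω | X0 ω + X1 ω > x ∧ Y0 ω + Y1 ω > y}
    (fun ω hω => ⟨by have h1 : X0 ω > x := hω.1; linarith, by have h2 : Y1 ω > y := hω.2; linarith⟩)
    (fun ω hω => ⟨show X0 ω + X1 ω > x by have h1 : X0 ω > x := hω.1; have := hX1 ω; linarith,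
      show Y0 ω + Y1 ω > y by have h2 : Y1 ω > y := hω.2; have := hY0 ω; linarith⟩)
  obtain ⟨R10, hR10sub, hR10⟩ := hull_piece P {ω | X1 ω > x-(a1+h) ∧ Y0 ω > y-(a2+h)}
    {ω | X1 ω > x ∧ Y0 ω > y} {ω | X0 ω + X1 ω > x ∧ Y0 ω + Y1 ω > y}
    (fun ω hω => ⟨by have h1 : X1 ω > x := hω.1; linarith, by have h2 : Y0 ω > y := hω.2; linarith⟩)
    (fun ω hω => ⟨show X0 ω + X1 ω > x by have h1 : X1 ω > x := hω.1; have := hX0 ω; linarith,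
      show Y0 ω + Y1 ω > y by have h2 : Y0 ω > y := hω.2; have := hY1 ω; linarith⟩)
  obtain ⟨R11, hR11sub, hR11⟩ := hull_piece P {ω | X1 ω > x-(a1+h) ∧ Y1 ω > y-(a2+h)}
    {ω | X1 ω > x ∧ Y1 ω > y} {ω | X0 ω + X1 ω > x ∧ Y0 ω + Y1 ω > y}
    (fun ω hω => ⟨by have h1 : X1 ω > x := hω.1; linarith, by have h2 : Y1 ω > y := hω.2; linarith⟩)
    (fun ω hω => ⟨show X0 ω + X1 ω > x by have h1 : X1 ω > x := hω.1; have := hX0 ω; linarith,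
      show Y0 ω + Y1 ω > y by have h2 : Y1 ω > y := hω.2; have := hY0 ω; linarith⟩)
  have hR00' : (P R00).toReal ≤ ε * jtail P (fun ω => X0 ω + X1 ω) (fun ω => Y0 ω + Y1 ω) x y := by
    have e1 : (P {ω | X0 ω > x-(a1+h) ∧ Y0 ω > y-(a2+h)}).toReal = jtail P X0 Y0 (x-(a1+h)) (y-(a2+h)) := rfl
    have e2 : (P {ω | X0 ω > x ∧ Y0 ω > y}).toReal = jtail P X0 Y0 x y := rfl
    rw [e1, e2] at hR00
    have hx1 : (1+ε) * jtail P X0 Y0 x y - jtail P X0 Y0 x y = ε * jtail P X0 Y0 x y := by ring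
    have hx2 : ε * jtail P X0 Y0 x y ≤ ε * jtail P (fun ω => X0 ω + X1 ω) (fun ω => Y0 ω + Y1 ω) x y :=
      mul_le_mul_of_nonneg_left j00 (le_of_lt hε)
    linarith
  have hR01' : (P R01).toReal ≤ ε * jtail P (fun ω => X0 ω + X1 ω) (fun ω => Y0 ω + Y1 ω) x y := by
    have e1 : (P {ω | X0 ω > x-(a1+h) ∧ Y1 ω > y-(a2+h)}).toReal = jtail P X0 Y1 (x-(a1+h)) (y-(a2+h)) := rfl
    have e2 : (P {ω | X0 ω > x ∧ Y1 ω > y}).toReal = jtail P X0 Y1 x y := rfl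
    rw [e1, e2] at hR01
    have hx1 : (1+ε) * jtail P X0 Y1 x y - jtail P X0 Y1 x y = ε * jtail P X0 Y1 x y := by ring
    have hx2 : ε * jtail P X0 Y1 x y ≤ ε * jtail P (fun ω => X0 ω + X1 ω) (fun ω => Y0 ω + Y1 ω) x y :=
      mul_le_mul_of_nonneg_left j01 (le_of_lt hε)
    linarith
  have hR10' : (P R10).toReal ≤ ε * jtail P (fun ω => X0 ω + X1 ω) (fun ω => Y0 ω + Y1 ω) x y := by
    have e1 : (P {ω | X1 ω > x-(a1+h) ∧ Y0 ω > y-(a2+h)}).toReal = jtail P X1 Y0 (x-(a1+h)) (y-(a2+h)) := rfl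
    have e2 : (P {ω | X1 ω > x ∧ Y0 ω > y}).toReal = jtail P X1 Y0 x y := rfl
    rw [e1, e2] at hR10
    have hx1 : (1+ε) * jtail P X1 Y0 x y - jtail P X1 Y0 x y = ε * jtail P X1 Y0 x y := by ring
    have hx2 : ε * jtail P X1 Y0 x y ≤ ε * jtail P (fun ω => X0 ω + X1 ω) (fun ω => Y0 ω + Y1 ω) x y :=
      mul_le_mul_of_nonneg_left j10 (le_of_lt hε)
    linarith
  have hR11' : (P R11).toReal ≤ ε * jtail P (fun ω => X0 ω + X1 ω) (fun ω => Y0 ω + Y1 ω) x y := by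
    have e1 : (P {ω | X1 ω > x-(a1+h) ∧ Y1 ω > y-(a2+h)}).toReal = jtail P X1 Y1 (x-(a1+h)) (y-(a2+h)) := rfl
    have e2 : (P {ω | X1 ω > x ∧ Y1 ω > y}).toReal = jtail P X1 Y1 x y := rfl
    rw [e1, e2] at hR11
    have hx1 : (1+ε) * jtail P X1 Y1 x y - jtail P X1 Y1 x y = ε * jtail P X1 Y1 x y := by ring
    have hx2 : ε * jtail P X1 Y1 x y ≤ ε * jtail P (fun ω => X0 ω + X1 ω) (fun ω => Y0 ω + Y1 ω) x y :=
      mul_le_mul_of_nonneg_left j11 (le_of_lt hε)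
    linarith
  -- fix beta-reduced versions of the long-tail bounds (for A-pieces above we used hd directly)
  -- cross-term bounds
  have hB00' : (P {ω | X1 ω > h ∧ X0 ω > (x-a1)/2 ∧ Y0 ω > (y-a2)/2}).toReal
      ≤ ε * (Cp * jtail P (fun ω => X0 ω + X1 ω) (fun ω => Y0 ω + Y1 ω) x y) := by
    have step1 := hgB00 h ((x-a1)/2) ((y-a2)/2)
      (le_min hB00h (le_min (le_trans hB00h hcu) (le_trans hB00h hcv)))
    have step2 : jtail P X0 Y0 ((x-a1)/2) ((y-a2)/2) ≤ jtail P X0 Y0 (1/4*x) (1/4*y) :=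
      jtail_anti P X0 Y0 (by linarith) (by linarith)
    have step3 := hq00 x y hM00
    have step4 : C00 * jtail P X0 Y0 x y ≤ Cp * jtail P X0 Y0 x y :=
      mul_le_mul_of_nonneg_right hC00p (jtail_nn P X0 Y0 x y)
    have step5 : Cp * jtail P X0 Y0 x y ≤ Cp * jtail P (fun ω => X0 ω + X1 ω) (fun ω => Y0 ω + Y1 ω) x y :=
      mul_le_mul_of_nonneg_left j00 hCp0
    exact le_trans step1 (mul_le_mul_of_nonneg_left
      (le_trans step2 (le_trans step3 (le_trans step4 step5))) (le_of_lt hε))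
  have hB01' : (P {ω | X1 ω > h ∧ X0 ω > (x-a1)/2 ∧ Y1 ω > (y-a2)/2}).toReal
      ≤ ε * (Cp * jtail P (fun ω => X0 ω + X1 ω) (fun ω => Y0 ω + Y1 ω) x y) := by
    have step1 := hgB01 h ((x-a1)/2) ((y-a2)/2)
      (le_min hB01h (le_min (le_trans hB01h hcu) (le_trans hB01h hcv)))
    have step2 : jtail P X0 Y1 ((x-a1)/2) ((y-a2)/2) ≤ jtail P X0 Y1 (1/4*x) (1/4*y) :=
      jtail_anti P X0 Y1 (by linarith) (by linarith)
    have step3 := hq01 x y hM01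
    have step4 : C01 * jtail P X0 Y1 x y ≤ Cp * jtail P X0 Y1 x y :=
      mul_le_mul_of_nonneg_right hC01p (jtail_nn P X0 Y1 x y)
    have step5 : Cp * jtail P X0 Y1 x y ≤ Cp * jtail P (fun ω => X0 ω + X1 ω) (fun ω => Y0 ω + Y1 ω) x y :=
      mul_le_mul_of_nonneg_left j01 hCp0
    exact le_trans step1 (mul_le_mul_of_nonneg_left
      (le_trans step2 (le_trans step3 (le_trans step4 step5))) (le_of_lt hε))
  have hB10' : (P {ω | X0 ω > h ∧ X1 ω > (x-a1)/2 ∧ Y0 ω > (y-a2)/2}).toReal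
      ≤ ε * (Cp * jtail P (fun ω => X0 ω + X1 ω) (fun ω => Y0 ω + Y1 ω) x y) := by
    have step1 := hgB10 h ((x-a1)/2) ((y-a2)/2)
      (le_min hB10h (le_min (le_trans hB10h hcu) (le_trans hB10h hcv)))
    have step2 : jtail P X1 Y0 ((x-a1)/2) ((y-a2)/2) ≤ jtail P X1 Y0 (1/4*x) (1/4*y) :=
      jtail_anti P X1 Y0 (by linarith) (by linarith)
    have step3 := hq10 x y hM10
    have step4 : C10 * jtail P X1 Y0 x y ≤ Cp * jtail P X1 Y0 x y :=
      mul_le_mul_of_nonneg_right hC10p (jtail_nn P X1 Y0 x y)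
    have step5 : Cp * jtail P X1 Y0 x y ≤ Cp * jtail P (fun ω => X0 ω + X1 ω) (fun ω => Y0 ω + Y1 ω) x y :=
      mul_le_mul_of_nonneg_left j10 hCp0
    exact le_trans step1 (mul_le_mul_of_nonneg_left
      (le_trans step2 (le_trans step3 (le_trans step4 step5))) (le_of_lt hε))
  have hB11' : (P {ω | X0 ω > h ∧ X1 ω > (x-a1)/2 ∧ Y1 ω > (y-a2)/2}).toReal
      ≤ ε * (Cp * jtail P (fun ω => X0 ω + X1 ω) (fun ω => Y0 ω + Y1 ω) x y) := by
    have step1 := hgB11 h ((x-a1)/2) ((y-a2)/2)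
      (le_min hB11h (le_min (le_trans hB11h hcu) (le_trans hB11h hcv)))
    have step2 : jtail P X1 Y1 ((x-a1)/2) ((y-a2)/2) ≤ jtail P X1 Y1 (1/4*x) (1/4*y) :=
      jtail_anti P X1 Y1 (by linarith) (by linarith)
    have step3 := hq11 x y hM11
    have step4 : C11 * jtail P X1 Y1 x y ≤ Cp * jtail P X1 Y1 x y :=
      mul_le_mul_of_nonneg_right hC11p (jtail_nn P X1 Y1 x y)
    have step5 : Cp * jtail P X1 Y1 x y ≤ Cp * jtail P (fun ω => X0 ω + X1 ω) (fun ω => Y0 ω + Y1 ω) x y :=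
      mul_le_mul_of_nonneg_left j11 hCp0
    exact le_trans step1 (mul_le_mul_of_nonneg_left
      (le_trans step2 (le_trans step3 (le_trans step4 step5))) (le_of_lt hε))
  have hC00' : (P {ω | Y1 ω > h ∧ X0 ω > (x-a1)/2 ∧ Y0 ω > (y-a2)/2}).toReal
      ≤ ε * (Cp * jtail P (fun ω => X0 ω + X1 ω) (fun ω => Y0 ω + Y1 ω) x y) := by
    have step1 := hgC00 h ((x-a1)/2) ((y-a2)/2)
      (le_min hC00h (le_min (le_trans hC00h hcu) (le_trans hC00h hcv)))
    have step2 : jtail P X0 Y0 ((x-a1)/2) ((y-a2)/2) ≤ jtail P X0 Y0 (1/4*x) (1/4*y) :=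
      jtail_anti P X0 Y0 (by linarith) (by linarith)
    have step3 := hq00 x y hM00
    have step4 : C00 * jtail P X0 Y0 x y ≤ Cp * jtail P X0 Y0 x y :=
      mul_le_mul_of_nonneg_right hC00p (jtail_nn P X0 Y0 x y)
    have step5 : Cp * jtail P X0 Y0 x y ≤ Cp * jtail P (fun ω => X0 ω + X1 ω) (fun ω => Y0 ω + Y1 ω) x y :=
      mul_le_mul_of_nonneg_left j00 hCp0
    exact le_trans step1 (mul_le_mul_of_nonneg_left
      (le_trans step2 (le_trans step3 (le_trans step4 step5))) (le_of_lt hε))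
  have hC01' : (P {ω | Y0 ω > h ∧ X0 ω > (x-a1)/2 ∧ Y1 ω > (y-a2)/2}).toReal
      ≤ ε * (Cp * jtail P (fun ω => X0 ω + X1 ω) (fun ω => Y0 ω + Y1 ω) x y) := by
    have step1 := hgC01 h ((x-a1)/2) ((y-a2)/2)
      (le_min hC01h (le_min (le_trans hC01h hcu) (le_trans hC01h hcv)))
    have step2 : jtail P X0 Y1 ((x-a1)/2) ((y-a2)/2) ≤ jtail P X0 Y1 (1/4*x) (1/4*y) :=
      jtail_anti P X0 Y1 (by linarith) (by linarith)
    have step3 := hq01 x y hM01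
    have step4 : C01 * jtail P X0 Y1 x y ≤ Cp * jtail P X0 Y1 x y :=
      mul_le_mul_of_nonneg_right hC01p (jtail_nn P X0 Y1 x y)
    have step5 : Cp * jtail P X0 Y1 x y ≤ Cp * jtail P (fun ω => X0 ω + X1 ω) (fun ω => Y0 ω + Y1 ω) x y :=
      mul_le_mul_of_nonneg_left j01 hCp0
    exact le_trans step1 (mul_le_mul_of_nonneg_left
      (le_trans step2 (le_trans step3 (le_trans step4 step5))) (le_of_lt hε))
  have hC10' : (P {ω | Y1 ω > h ∧ X1 ω > (x-a1)/2 ∧ Y0 ω > (y-a2)/2}).toReal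
      ≤ ε * (Cp * jtail P (fun ω => X0 ω + X1 ω) (fun ω => Y0 ω + Y1 ω) x y) := by
    have step1 := hgC10 h ((x-a1)/2) ((y-a2)/2)
      (le_min hC10h (le_min (le_trans hC10h hcu) (le_trans hC10h hcv)))
    have step2 : jtail P X1 Y0 ((x-a1)/2) ((y-a2)/2) ≤ jtail P X1 Y0 (1/4*x) (1/4*y) :=
      jtail_anti P X1 Y0 (by linarith) (by linarith)
    have step3 := hq10 x y hM10
    have step4 : C10 * jtail P X1 Y0 x y ≤ Cp * jtail P X1 Y0 x y :=
      mul_le_mul_of_nonneg_right hC10p (jtail_nn P X1 Y0 x y)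
    have step5 : Cp * jtail P X1 Y0 x y ≤ Cp * jtail P (fun ω => X0 ω + X1 ω) (fun ω => Y0 ω + Y1 ω) x y :=
      mul_le_mul_of_nonneg_left j10 hCp0
    exact le_trans step1 (mul_le_mul_of_nonneg_left
      (le_trans step2 (le_trans step3 (le_trans step4 step5))) (le_of_lt hε))
  have hC11' : (P {ω | Y0 ω > h ∧ X1 ω > (x-a1)/2 ∧ Y1 ω > (y-a2)/2}).toReal
      ≤ ε * (Cp * jtail P (fun ω => X0 ω + X1 ω) (fun ω => Y0 ω + Y1 ω) x y) := by
    have step1 := hgC11 h ((x-a1)/2) ((y-a2)/2)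
      (le_min hC11h (le_min (le_trans hC11h hcu) (le_trans hC11h hcv)))
    have step2 : jtail P X1 Y1 ((x-a1)/2) ((y-a2)/2) ≤ jtail P X1 Y1 (1/4*x) (1/4*y) :=
      jtail_anti P X1 Y1 (by linarith) (by linarith)
    have step3 := hq11 x y hM11
    have step4 : C11 * jtail P X1 Y1 x y ≤ Cp * jtail P X1 Y1 x y :=
      mul_le_mul_of_nonneg_right hC11p (jtail_nn P X1 Y1 x y)
    have step5 : Cp * jtail P X1 Y1 x y ≤ Cp * jtail P (fun ω => X0 ω + X1 ω) (fun ω => Y0 ω + Y1 ω) x y :=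
      mul_le_mul_of_nonneg_left j11 hCp0
    exact le_trans step1 (mul_le_mul_of_nonneg_left
      (le_trans step2 (le_trans step3 (le_trans step4 step5))) (le_of_lt hε))
  -- covering inclusion
  have cover : {ω | X0 ω + X1 ω > x-a1 ∧ Y0 ω + Y1 ω > y-a2} ⊆
      toMeasurable P {ω | X0 ω + X1 ω > x ∧ Y0 ω + Y1 ω > y} ∪ (R00 ∪
        ({ω | X1 ω > h ∧ X0 ω > (x-a1)/2 ∧ Y0 ω > (y-a2)/2} ∪
        ({ω | Y1 ω > h ∧ X0 ω > (x-a1)/2 ∧ Y0 ω > (y-a2)/2} ∪ (R01 ∪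
        ({ω | X1 ω > h ∧ X0 ω > (x-a1)/2 ∧ Y1 ω > (y-a2)/2} ∪
        ({ω | Y0 ω > h ∧ X0 ω > (x-a1)/2 ∧ Y1 ω > (y-a2)/2} ∪ (R10 ∪
        ({ω | X0 ω > h ∧ X1 ω > (x-a1)/2 ∧ Y0 ω > (y-a2)/2} ∪
        ({ω | Y1 ω > h ∧ X1 ω > (x-a1)/2 ∧ Y0 ω > (y-a2)/2} ∪ (R11 ∪
        ({ω | X0 ω > h ∧ X1 ω > (x-a1)/2 ∧ Y1 ω > (y-a2)/2} ∪
         {ω | Y0 ω > h ∧ X1 ω > (x-a1)/2 ∧ Y1 ω > (y-a2)/2}))))))))))) := by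
    intro ω hω
    simp only [Set.mem_setOf_eq] at hω
    obtain ⟨hu, hv⟩ := hω
    have hs := split2 (a0 := X0 ω) (a1 := X1 ω) (b0 := Y0 ω) (b1 := Y1 ω)
      (u := x-a1) (v := y-a2) (h := h) hu hv
    simp only [Set.mem_union, Set.mem_setOf_eq]
    rcases hs with (h'|h'|h') | ((h'|h'|h') | ((h'|h'|h') | (h'|h'|h')))
    · rcases hR00sub ((⟨by linarith [h'.1], by linarith [h'.2]⟩ :
        X0 ω > x-(a1+h) ∧ Y0 ω > y-(a2+h))) with hw | hr
      · exact Or.inl hw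
      · exact Or.inr (Or.inl hr)
    · exact Or.inr (Or.inr (Or.inl h'))
    · exact Or.inr (Or.inr (Or.inr (Or.inl h')))
    · rcases hR01sub ((⟨by linarith [h'.1], by linarith [h'.2]⟩ :
        X0 ω > x-(a1+h) ∧ Y1 ω > y-(a2+h))) with hw | hr
      · exact Or.inl hw
      · exact Or.inr (Or.inr (Or.inr (Or.inr (Or.inl hr))))
    · exact Or.inr (Or.inr (Or.inr (Or.inr (Or.inr (Or.inl h')))))
    · exact Or.inr (Or.inr (Or.inr (Or.inr (Or.inr (Or.inr (Or.inl h'))))))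
    · rcases hR10sub ((⟨by linarith [h'.1], by linarith [h'.2]⟩ :
        X1 ω > x-(a1+h) ∧ Y0 ω > y-(a2+h))) with hw | hr
      · exact Or.inl hw
      · exact Or.inr (Or.inr (Or.inr (Or.inr (Or.inr (Or.inr (Or.inr (Or.inl hr)))))))
    · exact Or.inr (Or.inr (Or.inr (Or.inr (Or.inr (Or.inr (Or.inr (Or.inr (Or.inl h'))))))))
    · exact Or.inr (Or.inr (Or.inr (Or.inr (Or.inr (Or.inr (Or.inr (Or.inr (Or.inr (Or.inl h')))))))))
    · rcases hR11sub ((⟨by linarith [h'.1], by linarith [h'.2]⟩ :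
        X1 ω > x-(a1+h) ∧ Y1 ω > y-(a2+h))) with hw | hr
      · exact Or.inl hw
      · exact Or.inr (Or.inr (Or.inr (Or.inr (Or.inr (Or.inr (Or.inr (Or.inr (Or.inr (Or.inr (Or.inl hr))))))))))
    · exact Or.inr (Or.inr (Or.inr (Or.inr (Or.inr (Or.inr (Or.inr (Or.inr (Or.inr (Or.inr (Or.inr (Or.inl h')))))))))))
    · exact Or.inr (Or.inr (Or.inr (Or.inr (Or.inr (Or.inr (Or.inr (Or.inr (Or.inr (Or.inr (Or.inr (Or.inr h')))))))))))
  -- the main estimate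
  have main : jtail P (fun ω => X0 ω + X1 ω) (fun ω => Y0 ω + Y1 ω) (x-a1) (y-a2)
      ≤ jtail P (fun ω => X0 ω + X1 ω) (fun ω => Y0 ω + Y1 ω) x y +
        (ε * jtail P (fun ω => X0 ω + X1 ω) (fun ω => Y0 ω + Y1 ω) x y +
        (ε * (Cp * jtail P (fun ω => X0 ω + X1 ω) (fun ω => Y0 ω + Y1 ω) x y) +
        (ε * (Cp * jtail P (fun ω => X0 ω + X1 ω) (fun ω => Y0 ω + Y1 ω) x y) +
        (ε * jtail P (fun ω => X0 ω + X1 ω) (fun ω => Y0 ω + Y1 ω) x y +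
        (ε * (Cp * jtail P (fun ω => X0 ω + X1 ω) (fun ω => Y0 ω + Y1 ω) x y) +
        (ε * (Cp * jtail P (fun ω => X0 ω + X1 ω) (fun ω => Y0 ω + Y1 ω) x y) +
        (ε * jtail P (fun ω => X0 ω + X1 ω) (fun ω => Y0 ω + Y1 ω) x y +
        (ε * (Cp * jtail P (fun ω => X0 ω + X1 ω) (fun ω => Y0 ω + Y1 ω) x y) +
        (ε * (Cp * jtail P (fun ω => X0 ω + X1 ω) (fun ω => Y0 ω + Y1 ω) x y) +
        (ε * jtail P (fun ω => X0 ω + X1 ω) (fun ω => Y0 ω + Y1 ω) x y +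
        (ε * (Cp * jtail P (fun ω => X0 ω + X1 ω) (fun ω => Y0 ω + Y1 ω) x y) +
         ε * (Cp * jtail P (fun ω => X0 ω + X1 ω) (fun ω => Y0 ω + Y1 ω) x y)))))))))))) := by
    refine le_trans (mymono P cover) ?_
    exact mychain P (le_of_eq (by rw [measure_toMeasurable]; rfl))
      (mychain P hR00' (mychain P hB00' (mychain P hC00' (mychain P hR01'
      (mychain P hB01' (mychain P hC01' (mychain P hR10' (mychain P hB10'
      (mychain P hC10' (mychain P hR11' (mychain P hB11' hC11')))))))))))
  -- final computation
  have hJ : 0 < jtail P (fun ω => X0 ω + X1 ω) (fun ω => Y0 ω + Y1 ω) x y :=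
    lt_of_lt_of_le (hD00.2.2.1 x y) j00
  have hmono : jtail P (fun ω => X0 ω + X1 ω) (fun ω => Y0 ω + Y1 ω) x y
      ≤ jtail P (fun ω => X0 ω + X1 ω) (fun ω => Y0 ω + Y1 ω) (x-a1) (y-a2) :=
    jtail_anti P _ _ (by linarith) (by linarith)
  show |jtail P (fun ω => X0 ω + X1 ω) (fun ω => Y0 ω + Y1 ω) (x-a1) (y-a2) /
      jtail P (fun ω => X0 ω + X1 ω) (fun ω => Y0 ω + Y1 ω) x y - 1| < ε₀
  rw [abs_of_nonneg (by
    have := (one_le_div hJ).2 hmono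
    linarith)]
  rw [sub_lt_iff_lt_add, div_lt_iff₀ hJ]
  have kp := mul_lt_mul_of_pos_right key hJ
  have exp1 : ε * (4 + 8*Cp) * jtail P (fun ω => X0 ω + X1 ω) (fun ω => Y0 ω + Y1 ω) x y
      = 4*(ε * jtail P (fun ω => X0 ω + X1 ω) (fun ω => Y0 ω + Y1 ω) x y)
        + 8*(ε * (Cp * jtail P (fun ω => X0 ω + X1 ω) (fun ω => Y0 ω + Y1 ω) x y)) := by ring
  have exp2 : (ε₀ + 1) * jtail P (fun ω => X0 ω + X1 ω) (fun ω => Y0 ω + Y1 ω) x y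
      = ε₀ * jtail P (fun ω => X0 ω + X1 ω) (fun ω => Y0 ω + Y1 ω) x y
        + jtail P (fun ω => X0 ω + X1 ω) (fun ω => Y0 ω + Y1 ω) x y := by ring
  linarith

end Aux

/-- closure of `(𝓓∩𝓛)⁽²⁾` under convolution, given GTAI and
TAI within each sequence. -/
theorem stmt12 {Ω : Type*} [MeasurableSpace Ω] (P : Measure Ω) [IsProbabilityMeasure P]
    (X Y : Fin 2 → Ω → ℝ)
    (hXpos : ∀ i ω, 0 ≤ X i ω) (hYpos : ∀ j ω, 0 ≤ Y j ω)
    (hF : ∀ k, DominatedVarying P (X k) ∧ LongTailed P (X k))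
    (hG : ∀ l, DominatedVarying P (Y l) ∧ LongTailed P (Y l))
    (hGTAI : GTAI P X Y)
    (hDL2 : ∀ k l, PairD P (X k) (Y l) ∧ PairL P (X k) (Y l))
    (hTAIX : TAI P X) (hTAIY : TAI P Y) :
    PairD P (fun ω => X 0 ω + X 1 ω) (fun ω => Y 0 ω + Y 1 ω) ∧
      PairL P (fun ω => X 0 ω + X 1 ω) (fun ω => Y 0 ω + Y 1 ω) := by
  -- TAI-derived cross conditions
  have cX10 : ∀ ε > (0:ℝ), ∃ M : ℝ, ∀ u v : ℝ, M ≤ min u v →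
      (P {ω | X 1 ω > u ∧ X 0 ω > v}).toReal ≤ ε * tail P (X 0) v := by
    intro ε hε
    obtain ⟨M, hM⟩ := hTAIX 1 0 (by decide) ε hε
    refine ⟨M, fun u v huv => le_trans (mymono P ?_) (hM u v huv)⟩
    intro ω hω
    exact ⟨lt_of_lt_of_le hω.1 (le_abs_self _), hω.2⟩
  have cX01 : ∀ ε > (0:ℝ), ∃ M : ℝ, ∀ u v : ℝ, M ≤ min u v →
      (P {ω | X 0 ω > u ∧ X 1 ω > v}).toReal ≤ ε * tail P (X 1) v := by
    intro ε hε
    obtain ⟨M, hM⟩ := hTAIX 0 1 (by decide) ε hε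
    refine ⟨M, fun u v huv => le_trans (mymono P ?_) (hM u v huv)⟩
    intro ω hω
    exact ⟨lt_of_lt_of_le hω.1 (le_abs_self _), hω.2⟩
  have cY10 : ∀ ε > (0:ℝ), ∃ M : ℝ, ∀ u v : ℝ, M ≤ min u v →
      (P {ω | Y 1 ω > u ∧ Y 0 ω > v}).toReal ≤ ε * tail P (Y 0) v := by
    intro ε hε
    obtain ⟨M, hM⟩ := hTAIY 1 0 (by decide) ε hε
    refine ⟨M, fun u v huv => le_trans (mymono P ?_) (hM u v huv)⟩
    intro ω hω
    exact ⟨lt_of_lt_of_le hω.1 (le_abs_self _), hω.2⟩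
  have cY01 : ∀ ε > (0:ℝ), ∃ M : ℝ, ∀ u v : ℝ, M ≤ min u v →
      (P {ω | Y 0 ω > u ∧ Y 1 ω > v}).toReal ≤ ε * tail P (Y 1) v := by
    intro ε hε
    obtain ⟨M, hM⟩ := hTAIY 0 1 (by decide) ε hε
    refine ⟨M, fun u v huv => le_trans (mymono P ?_) (hM u v huv)⟩
    intro ω hω
    exact ⟨lt_of_lt_of_le hω.1 (le_abs_self _), hω.2⟩
  -- GTAI-derived cross conditions
  have gB : ∀ i k : Fin 2, i ≠ k → ∀ l : Fin 2, ∀ ε > (0:ℝ), ∃ M : ℝ, ∀ t u v : ℝ,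
      M ≤ min t (min u v) →
      (P {ω | X i ω > t ∧ X k ω > u ∧ Y l ω > v}).toReal ≤ ε * jtail P (X k) (Y l) u v := by
    intro i k hik l ε hε
    obtain ⟨M, hM⟩ := hGTAI.1 i k l hik ε hε
    refine ⟨M, fun t u v htuv => le_trans (mymono P ?_) (hM t u v htuv)⟩
    intro ω hω
    exact ⟨lt_of_lt_of_le hω.1 (le_abs_self _), hω.2.1, hω.2.2⟩
  have gC : ∀ j l : Fin 2, j ≠ l → ∀ k : Fin 2, ∀ ε > (0:ℝ), ∃ M : ℝ, ∀ t u v : ℝ,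
      M ≤ min t (min u v) →
      (P {ω | Y j ω > t ∧ X k ω > u ∧ Y l ω > v}).toReal ≤ ε * jtail P (X k) (Y l) u v := by
    intro j l hjl k ε hε
    obtain ⟨M, hM⟩ := hGTAI.2 j l k hjl ε hε
    refine ⟨M, fun t u v htuv => ?_⟩
    have ht' : M ≤ min u (min v t) := by
      simp only [le_min_iff] at htuv ⊢
      exact ⟨htuv.2.1, htuv.2.2, htuv.1⟩
    refine le_trans (mymono P ?_) (hM u v t ht')
    intro ω hω
    exact ⟨lt_of_lt_of_le hω.1 (le_abs_self _), hω.2.1, hω.2.2⟩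
  -- marginal classes for the sums
  have hDVS : DominatedVarying P (fun ω => X 0 ω + X 1 ω) :=
    DV_sum_s12 P (X 0) (X 1) (hXpos 0) (hXpos 1) (hF 0).1 (hF 1).1
  have hDVT : DominatedVarying P (fun ω => Y 0 ω + Y 1 ω) :=
    DV_sum_s12 P (Y 0) (Y 1) (hYpos 0) (hYpos 1) (hG 0).1 (hG 1).1
  have hLS : LongTailed P (fun ω => X 0 ω + X 1 ω) :=
    L_sum P (X 0) (X 1) (hXpos 0) (hXpos 1) (hF 0).1 (hF 1).1 (hF 0).2 (hF 1).2 cX10 cX01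
  have hLT : LongTailed P (fun ω => Y 0 ω + Y 1 ω) :=
    L_sum P (Y 0) (Y 1) (hYpos 0) (hYpos 1) (hG 0).1 (hG 1).1 (hG 0).2 (hG 1).2 cY10 cY01
  -- joint positivity
  have posJ : ∀ x y : ℝ, 0 < jtail P (fun ω => X 0 ω + X 1 ω) (fun ω => Y 0 ω + Y 1 ω) x y :=
    fun x y => lt_of_lt_of_le ((hDL2 0 0).1.2.2.1 x y)
      (jtail_comp_le P (X 0) (Y 0) (X 0) (X 1) (Y 0) (Y 1)
        (fun ω => le_add_of_nonneg_right (hXpos 1 ω))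
        (fun ω => le_add_of_nonneg_right (hYpos 1 ω)) x y)
  refine ⟨⟨hDVS, hDVT, posJ, ?_⟩, ⟨hLS, hLT, posJ, ?_⟩⟩
  · exact jointD_sum P (X 0) (X 1) (Y 0) (Y 1) (hXpos 0) (hXpos 1) (hYpos 0) (hYpos 1)
      (hDL2 0 0).1 (hDL2 0 1).1 (hDL2 1 0).1 (hDL2 1 1).1
  · exact jointL_sum P (X 0) (X 1) (Y 0) (Y 1) (hXpos 0) (hXpos 1) (hYpos 0) (hYpos 1)
      (hDL2 0 0).2 (hDL2 0 1).2 (hDL2 1 0).2 (hDL2 1 1).2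
      (hDL2 0 0).1 (hDL2 0 1).1 (hDL2 1 0).1 (hDL2 1 1).1
      (gB 1 0 (by decide) 0) (gB 1 0 (by decide) 1) (gB 0 1 (by decide) 0) (gB 0 1 (by decide) 1)
      (gC 1 0 (by decide) 0) (gC 0 1 (by decide) 0) (gC 1 0 (by decide) 1) (gC 0 1 (by decide) 1)
end

section
/- Let Θ be a nonnegative random variable with distribution B with B(0−)=0; let (X,Y) be a random pair with joint tail H̄(x,y) = P[ΘX > x, ΘY > y] > 0 for all x,y > 0. Then Assumption A (B̄(c·(x∧y)) = o(H̄(x,y)) as x∧y → ∞ for all c > 0) holds if and only if there exists a function b : [0,∞) → (0,∞) with b(t) → ∞, b(t) = o(t) as t → ∞, and B̄(b(x∧y)) = o(H̄(x,y)) as x∧y → ∞. -/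
open MeasureTheory Filter Finset ProbabilityTheory

lemma tail_anti_s15 {Ω : Type*} [MeasurableSpace Ω] (P : Measure Ω) [IsProbabilityMeasure P]
    (X : Ω → ℝ) {a b : ℝ} (h : a ≤ b) : tail P X b ≤ tail P X a := by
  unfold tail
  refine ENNReal.toReal_mono (measure_ne_top P _) (measure_mono ?_)
  exact fun ω hω => lt_of_le_of_lt h hω

/-- Assumption A is equivalent to the existence of an auxiliary
function `b` with `b(t) → ∞`, `b(t) = o(t)` and `B̄(b(x∧y)) = o(H̄(x,y))`. -/
theorem stmt15 {Ω : Type*} [MeasurableSpace Ω] (P : Measure Ω) [IsProbabilityMeasure P]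
    (Θ X Y : Ω → ℝ)
    (hΘ : ∀ᵐ ω ∂P, 0 ≤ Θ ω)
    (hBpos : ∀ x : ℝ, 0 < x → 0 < tail P Θ x)
    (hHpos : ∀ x y : ℝ, 0 < x → 0 < y →
      0 < jtail P (fun ω => Θ ω * X ω) (fun ω => Θ ω * Y ω) x y) :
    (∀ c > (0:ℝ), TendstoMin (fun x y =>
        tail P Θ (c * min x y)
          / jtail P (fun ω => Θ ω * X ω) (fun ω => Θ ω * Y ω) x y) 0) ↔
    (∃ b : ℝ → ℝ, (∀ t : ℝ, 0 < b t) ∧ Tendsto b atTop atTop ∧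
        Tendsto (fun t => b t / t) atTop (nhds 0) ∧
        TendstoMin (fun x y =>
          tail P Θ (b (min x y))
            / jtail P (fun ω => Θ ω * X ω) (fun ω => Θ ω * Y ω) x y) 0) := by
  classical
  constructor
  · intro hA
    have hA' : ∀ n : ℕ, ∃ M : ℝ, ∀ x y : ℝ, M ≤ min x y →
        |tail P Θ ((1/((n:ℝ)+1)) * min x y)
          / jtail P (fun ω => Θ ω * X ω) (fun ω => Θ ω * Y ω) x y - 0| < 1/((n:ℝ)+1) := by
      intro n
      exact hA (1/((n:ℝ)+1)) (by positivity) (1/((n:ℝ)+1)) (by positivity)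
    choose A hAspec using hA'
    let M : ℕ → ℝ := fun n => Nat.rec (max (A 0) 1)
      (fun j Mj => max (A (j+1)) (max (Mj + 1) (((j:ℝ)+2)^2))) n
    have hMsucc : ∀ n : ℕ, M (n+1) = max (A (n+1)) (max (M n + 1) (((n:ℝ)+2)^2)) :=
      fun n => rfl
    have hM0 : (1:ℝ) ≤ M 0 := le_max_right (A 0) 1
    have hMsq : ∀ n : ℕ, ((n:ℝ)+1)^2 ≤ M n := by
      intro n
      cases n with
      | zero => simpa using hM0
      | succ j =>
        have h1 : ((j:ℝ)+2)^2 ≤ M (j+1) := by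
          rw [hMsucc]; exact (le_max_right _ _).trans (le_max_right _ _)
        push_cast
        rw [show ((j:ℝ)+1+1) = (j:ℝ)+2 from by ring]
        exact h1
    have hMA : ∀ n : ℕ, A n ≤ M n := by
      intro n
      cases n with
      | zero => exact le_max_left _ _
      | succ j => rw [hMsucc]; exact le_max_left _ _
    have hMmono : Monotone M := by
      apply monotone_nat_of_le_succ
      intro n
      rw [hMsucc]
      have : M n + 1 ≤ max (A (n+1)) (max (M n + 1) (((n:ℝ)+2)^2)) :=
        (le_max_left _ _).trans (le_max_right _ _)
      linarith
    let k : ℝ → ℕ := fun t => sSup {n : ℕ | M n ≤ t}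
    let b : ℝ → ℝ := fun t => max 1 (t / ((k t : ℝ) + 1))
    have hbdef : ∀ t, b t = max 1 (t / ((k t : ℝ) + 1)) := fun t => rfl
    have key : ∀ t : ℝ, M 0 ≤ t → M (k t) ≤ t ∧ ∀ n : ℕ, M n ≤ t → n ≤ k t := by
      intro t ht
      have hbdd : BddAbove {n : ℕ | M n ≤ t} := by
        refine ⟨⌈t⌉₊, fun n hn => ?_⟩
        have h1 : ((n:ℝ)+1)^2 ≤ t := (hMsq n).trans hn
        have h2 : (n:ℝ) ≤ t := by nlinarith [Nat.cast_nonneg (α := ℝ) n]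
        exact_mod_cast h2.trans (Nat.le_ceil t)
      have hne : {n : ℕ | M n ≤ t}.Nonempty := ⟨0, ht⟩
      exact ⟨Nat.sSup_mem hne hbdd, fun n hn => le_csSup hbdd hn⟩
    have hksq : ∀ t : ℝ, M 0 ≤ t → ((k t : ℝ)+1)^2 ≤ t :=
      fun t ht => (hMsq _).trans (key t ht).1
    have hbeq : ∀ t : ℝ, M 0 ≤ t → b t = t / ((k t : ℝ) + 1) := by
      intro t ht
      rw [hbdef]
      apply max_eq_right
      rw [le_div_iff₀ (by positivity)]
      nlinarith [hksq t ht, Nat.cast_nonneg (α := ℝ) (k t)]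
    have hbpos : ∀ t, 0 < b t := by
      intro t
      rw [hbdef]
      exact lt_of_lt_of_le zero_lt_one (le_max_left _ _)
    have hbtop : Tendsto b atTop atTop := by
      rw [tendsto_atTop_atTop]
      intro C
      refine ⟨M ⌈C⌉₊, fun t ht => ?_⟩
      have h0 : M 0 ≤ t := (hMmono (Nat.zero_le _)).trans ht
      have hk : (⌈C⌉₊ : ℕ) ≤ k t := (key t h0).2 _ ht
      have hkc : (C:ℝ) ≤ (k t : ℝ) + 1 := by
        have h1 : C ≤ (⌈C⌉₊ : ℝ) := Nat.le_ceil C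
        have h2 : ((⌈C⌉₊ : ℕ) : ℝ) ≤ (k t : ℝ) := by exact_mod_cast hk
        linarith
      rw [hbeq t h0]
      have hkpos : (0:ℝ) < (k t : ℝ) + 1 := by positivity
      rw [le_div_iff₀ hkpos]
      nlinarith [hksq t h0]
    have hbo : Tendsto (fun t => b t / t) atTop (nhds 0) := by
      rw [Metric.tendsto_atTop]
      intro ε hε
      obtain ⟨n, hn⟩ := exists_nat_one_div_lt hε
      refine ⟨M n, fun t ht => ?_⟩
      have h0 : M 0 ≤ t := (hMmono (Nat.zero_le _)).trans ht
      have ht0 : (0:ℝ) < t := lt_of_lt_of_le (by linarith) h0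
      have hk : n ≤ k t := (key t h0).2 _ ht
      rw [Real.dist_eq, sub_zero, hbeq t h0, div_right_comm, div_self ht0.ne']
      have hkpos : (0:ℝ) < (k t : ℝ) + 1 := by positivity
      rw [abs_of_nonneg (by positivity)]
      have h12 : 1/((k t : ℝ)+1) ≤ 1/((n:ℝ)+1) := by
        apply one_div_le_one_div_of_le (by positivity)
        have : (n:ℝ) ≤ (k t : ℝ) := by exact_mod_cast hk
        linarith
      calc 1/((k t : ℝ)+1) ≤ 1/((n:ℝ)+1) := h12
        _ < ε := hn
    refine ⟨b, hbpos, hbtop, hbo, ?_⟩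
    intro ε hε
    obtain ⟨n, hn⟩ := exists_nat_one_div_lt hε
    refine ⟨M n, fun x y hxy => ?_⟩
    have h0 : M 0 ≤ min x y := (hMmono (Nat.zero_le _)).trans hxy
    have hk : n ≤ k (min x y) := (key _ h0).2 _ hxy
    have hAle : A (k (min x y)) ≤ min x y := (hMA _).trans (key _ h0).1
    have hspec := hAspec (k (min x y)) x y hAle
    have hb : b (min x y) = (1/((k (min x y) : ℝ)+1)) * min x y := by
      rw [hbeq _ h0, one_div_mul_eq_div]
    show |tail P Θ (b (min x y))
          / jtail P (fun ω => Θ ω * X ω) (fun ω => Θ ω * Y ω) x y - 0| < ε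
    rw [hb]
    have h12 : 1/((k (min x y) : ℝ)+1) ≤ 1/((n:ℝ)+1) := by
      apply one_div_le_one_div_of_le (by positivity)
      have : (n:ℝ) ≤ (k (min x y) : ℝ) := by exact_mod_cast hk
      linarith
    exact (hspec.trans_le h12).trans hn
  · rintro ⟨b, hbp, hbtop, hbo, hbt⟩ c hc ε hε
    rw [Metric.tendsto_atTop] at hbo
    obtain ⟨T, hT⟩ := hbo c hc
    obtain ⟨M2, hM2⟩ := hbt ε hε
    refine ⟨max 1 (max T M2), fun x y hxy => ?_⟩
    have ht1 : (1:ℝ) ≤ min x y := le_trans (le_max_left _ _) hxy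
    have htT : T ≤ min x y := le_trans ((le_max_left T M2).trans (le_max_right 1 _)) hxy
    have htM2 : M2 ≤ min x y := le_trans ((le_max_right T M2).trans (le_max_right 1 _)) hxy
    have ht0 : (0:ℝ) < min x y := by linarith
    have hx0 : 0 < x := ht0.trans_le (min_le_left x y)
    have hy0 : 0 < y := ht0.trans_le (min_le_right x y)
    have hj : 0 < jtail P (fun ω => Θ ω * X ω) (fun ω => Θ ω * Y ω) x y := hHpos x y hx0 hy0
    have hblt : b (min x y) ≤ c * min x y := by
      have h1 := hT (min x y) htT
      rw [Real.dist_eq, sub_zero] at h1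
      have h2 : b (min x y) / min x y < c := lt_of_abs_lt h1
      exact le_of_lt ((div_lt_iff₀ ht0).mp h2)
    have hmono : tail P Θ (c * min x y) ≤ tail P Θ (b (min x y)) := tail_anti_s15 P Θ hblt
    have h2' : tail P Θ (b (min x y))
        / jtail P (fun ω => Θ ω * X ω) (fun ω => Θ ω * Y ω) x y < ε := by
      have := hM2 x y htM2
      rw [sub_zero] at this
      exact lt_of_abs_lt this
    show |tail P Θ (c * min x y)
          / jtail P (fun ω => Θ ω * X ω) (fun ω => Θ ω * Y ω) x y - 0| < ε
    have htn : (0:ℝ) ≤ tail P Θ (c * min x y) := ENNReal.toReal_nonneg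
    rw [sub_zero, abs_of_nonneg (div_nonneg htn hj.le)]
    calc tail P Θ (c * min x y)
          / jtail P (fun ω => Θ ω * X ω) (fun ω => Θ ω * Y ω) x y
        ≤ tail P Θ (b (min x y))
          / jtail P (fun ω => Θ ω * X ω) (fun ω => Θ ω * Y ω) x y := by
          apply div_le_div_of_nonneg_right hmono hj.le
        _ < ε := h2'
end
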